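/- arXiv:2506.22205 — 7 statements merged into one kernel-verified Lean document; each statement's English description precedes it below -/
import Mathlib

section
/- Let X be a Banach space, and let Y and Z be closed linear subspaces of X. Suppose there is a collection Φ of bounded linear operators on X such that: (i) every Λ ∈ Φ maps X into Y; (ii) every Λ ∈ Φ maps Z into Z; (iii) sup_{Λ∈Φ} ‖Λ‖ < ∞; (iv) for every y ∈ Y and every ε > 0 there exists Λ ∈ Φ with ‖y − Λy‖ < ε. Then the subspace Y + Z = {y + z : y ∈ Y, z ∈ Z} is closed in X. -/
open scoped Pointwise

/-- **Zalcman–Rudin theorem.** If `Y` and `Z` are closed subspaces of a Banach space `X`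
and `Φ` is a collection of bounded linear operators on `X` such that every `Λ ∈ Φ` maps
`X` into `Y` and `Z` into `Z`, the operator norms of elements of `Φ` are uniformly bounded,
and every `y ∈ Y` can be approximated by `Λ y` with `Λ ∈ Φ`, then `Y + Z` is closed. -/
theorem zalcman_rudin {𝕜 : Type*} [RCLike 𝕜] {X : Type*} [NormedAddCommGroup X]
    [NormedSpace 𝕜 X] [CompleteSpace X]
    (Y Z : Submodule 𝕜 X) (hY : IsClosed (Y : Set X)) (hZ : IsClosed (Z : Set X))
    (Φ : Set (X →L[𝕜] X))
    (h1 : ∀ Λ ∈ Φ, ∀ x : X, Λ x ∈ Y)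
    (h2 : ∀ Λ ∈ Φ, ∀ z ∈ Z, Λ z ∈ Z)
    (h3 : ∃ M : ℝ, ∀ Λ ∈ Φ, ‖Λ‖ ≤ M)
    (h4 : ∀ y ∈ Y, ∀ ε : ℝ, 0 < ε → ∃ Λ ∈ Φ, ‖y - Λ y‖ < ε) :
    IsClosed ((Y : Set X) + (Z : Set X)) := by
  obtain ⟨M, hM⟩ := h3
  obtain ⟨Λ₀, hΛ₀, -⟩ := h4 0 Y.zero_mem 1 one_pos
  have hM0 : 0 ≤ M := le_trans (norm_nonneg Λ₀) (hM Λ₀ hΛ₀)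
  set W : Submodule 𝕜 X := (Y ⊔ Z).topologicalClosure with hWdef
  have hYW : ∀ x ∈ Y, x ∈ W := fun x hx =>
    (Y ⊔ Z).le_topologicalClosure (Submodule.mem_sup_left hx)
  have hZW : ∀ x ∈ Z, x ∈ W := fun x hx =>
    (Y ⊔ Z).le_topologicalClosure (Submodule.mem_sup_right hx)
  have hset : ((Y : Set X) + (Z : Set X)) = ((Y ⊔ Z : Submodule 𝕜 X) : Set X) :=
    (Submodule.coe_sup Y Z).symm
  rw [hset]
  apply isClosed_of_closure_subset
  intro x₀ hx₀
  have hx₀W : x₀ ∈ W := hx₀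
  -- key step
  have key : ∀ n : ℕ, ∀ x : X, ∃ p : X × X × X, x ∈ W →
      p.1 ∈ Y ∧ p.2.1 ∈ Z ∧ p.2.2 ∈ W ∧ x = p.1 + p.2.1 + p.2.2 ∧
      ‖p.2.2‖ ≤ (1/2 : ℝ) ^ (n+1) ∧ ‖p.1‖ ≤ M * ‖x‖ := by
    intro n x
    by_cases hx : x ∈ W
    · have hε : (0:ℝ) < (1/2 : ℝ) ^ (n+1) := by positivity
      set δ : ℝ := (1/2 : ℝ) ^ (n+1) / (2 + M) with hδdef
      have hδ : 0 < δ := by positivity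
      have hx' : x ∈ closure ((Y ⊔ Z : Submodule 𝕜 X) : Set X) := by
        rw [← Submodule.topologicalClosure_coe]; exact hx
      obtain ⟨b, hb, hdist⟩ := Metric.mem_closure_iff.mp hx' _ hδ
      rw [← hset, Set.mem_add] at hb
      obtain ⟨y, hy, z, hz, rfl⟩ := hb
      obtain ⟨Λ, hΛ, hyΛ⟩ := h4 y hy _ hδ
      have hΛM : ‖Λ‖ ≤ M := hM Λ hΛ
      have hΛle : ∀ w : X, ‖Λ w‖ ≤ M * ‖w‖ := fun w =>
        (Λ.le_opNorm w).trans (mul_le_mul_of_nonneg_right hΛM (norm_nonneg w))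
      have hdb : ‖x - (y + z)‖ < δ := by rwa [dist_eq_norm] at hdist
      have hsum : x = Λ x + (z - Λ z) + (x - Λ x - (z - Λ z)) := by abel
      refine ⟨⟨Λ x, z - Λ z, x - Λ x - (z - Λ z)⟩, fun _ => ⟨h1 Λ hΛ x,
        Z.sub_mem hz (h2 Λ hΛ z hz),
        W.sub_mem (W.sub_mem hx (hYW _ (h1 Λ hΛ x))) (hZW _ (Z.sub_mem hz (h2 Λ hΛ z hz))),
        hsum, ?_, hΛle x⟩⟩
      have hrw : x - Λ x - (z - Λ z)
          = (x - (y + z)) - Λ (x - (y + z)) + (y - Λ y) := by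
        simp only [map_sub, map_add]; abel
      rw [hrw]
      calc ‖(x - (y + z)) - Λ (x - (y + z)) + (y - Λ y)‖
          ≤ ‖x - (y + z)‖ + ‖Λ (x - (y + z))‖ + ‖y - Λ y‖ :=
            le_trans (norm_add_le _ _) (by gcongr; exact norm_sub_le _ _)
        _ ≤ δ + M * δ + δ :=
            add_le_add (add_le_add hdb.le
              ((hΛle _).trans (mul_le_mul_of_nonneg_left hdb.le hM0))) hyΛ.le
        _ = (2 + M) * δ := by ring
        _ = (1/2 : ℝ) ^ (n+1) := by
            rw [hδdef, mul_div_cancel₀]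
            positivity
    · exact ⟨⟨0, 0, 0⟩, fun h => absurd h hx⟩
  choose F hF using key
  set g : ℕ → X := fun n => Nat.rec x₀ (fun n x => (F n x).2.2) n with hgdef
  have hgW : ∀ n, g n ∈ W := by
    intro n; induction n with
    | zero => exact hx₀W
    | succ n ih => exact (hF n (g n) ih).2.2.1
  set u : ℕ → X := fun n => (F n (g n)).1 with hudef
  set v : ℕ → X := fun n => (F n (g n)).2.1 with hvdef
  have hu : ∀ n, u n ∈ Y := fun n => (hF n (g n) (hgW n)).1
  have hv : ∀ n, v n ∈ Z := fun n => (hF n (g n) (hgW n)).2.1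
  have heq : ∀ n, g n = u n + v n + g (n+1) := fun n => (hF n (g n) (hgW n)).2.2.2.1
  have hgb' : ∀ n, ‖g (n+1)‖ ≤ (1/2 : ℝ) ^ (n+1) := fun n => (hF n (g n) (hgW n)).2.2.2.2.1
  have hub : ∀ n, ‖u n‖ ≤ M * ‖g n‖ := fun n => (hF n (g n) (hgW n)).2.2.2.2.2
  set C : ℝ := max ‖x₀‖ 1 with hCdef
  have hC1 : (1:ℝ) ≤ C := le_max_right _ _
  have hC0 : (0:ℝ) ≤ C := zero_le_one.trans hC1
  have hgb : ∀ n, ‖g n‖ ≤ C * (1/2 : ℝ) ^ n := by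
    intro n
    cases n with
    | zero =>
        rw [pow_zero, mul_one]
        exact le_max_left ‖x₀‖ 1
    | succ n =>
        refine (hgb' n).trans ?_
        exact le_mul_of_one_le_left (by positivity) hC1
  have hubC : ∀ n, ‖u n‖ ≤ M * C * (1/2 : ℝ) ^ n := by
    intro n
    refine (hub n).trans ?_
    rw [mul_assoc]
    exact mul_le_mul_of_nonneg_left (hgb n) hM0
  have hsum_u : Summable u := by
    refine Summable.of_norm (Summable.of_nonneg_of_le (fun n => norm_nonneg _) hubC ?_)
    exact (summable_geometric_two).mul_left (M * C)
  have hvb : ∀ n, ‖v n‖ ≤ (C + M * C + C) * (1/2 : ℝ) ^ n := by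
    intro n
    have h1' : v n = g n - u n - g (n+1) := by rw [heq n]; abel
    rw [h1']
    calc ‖g n - u n - g (n+1)‖ ≤ ‖g n - u n‖ + ‖g (n+1)‖ := norm_sub_le _ _
      _ ≤ (‖g n‖ + ‖u n‖) + ‖g (n+1)‖ := by gcongr; exact norm_sub_le _ _
      _ ≤ (C * (1/2:ℝ)^n + M * C * (1/2:ℝ)^n) + C * (1/2:ℝ)^(n+1) :=
          add_le_add (add_le_add (hgb n) (hubC n)) (by
            refine (hgb' n).trans (le_mul_of_one_le_left (by positivity) hC1))
      _ ≤ (C + M * C + C) * (1/2:ℝ)^n := by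
          have : (1/2:ℝ)^(n+1) ≤ (1/2:ℝ)^n := by
            apply pow_le_pow_of_le_one <;> norm_num
          nlinarith [pow_nonneg (by norm_num : (0:ℝ) ≤ 1/2) n]
  have hsum_v : Summable v := by
    refine Summable.of_norm (Summable.of_nonneg_of_le (fun n => norm_nonneg _) hvb ?_)
    exact (summable_geometric_two).mul_left _
  obtain ⟨y, hy⟩ := hsum_u
  obtain ⟨z, hz⟩ := hsum_v
  have hyY : y ∈ Y := hY.mem_of_tendsto hy.tendsto_sum_nat
    (Filter.Eventually.of_forall fun n => Y.sum_mem fun i _ => hu i)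
  have hzZ : z ∈ Z := hZ.mem_of_tendsto hz.tendsto_sum_nat
    (Filter.Eventually.of_forall fun n => Z.sum_mem fun i _ => hv i)
  have htel : ∀ n, ∑ i ∈ Finset.range n, (u i + v i) = x₀ - g n := by
    intro n; induction n with
    | zero => simp [hgdef]
    | succ n ih =>
        have h' : u n + v n = g n - g (n+1) := by rw [heq n]; abel
        rw [Finset.sum_range_succ, ih, h']; abel
  have hg0 : Filter.Tendsto g Filter.atTop (nhds 0) := by
    refine squeeze_zero_norm hgb ?_
    have := tendsto_pow_atTop_nhds_zero_of_lt_one (by norm_num : (0:ℝ) ≤ 1/2)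
      (by norm_num : (1/2:ℝ) < 1)
    simpa using this.const_mul C
  have htend : Filter.Tendsto (fun n => ∑ i ∈ Finset.range n, (u i + v i))
      Filter.atTop (nhds x₀) := by
    have : (fun n => ∑ i ∈ Finset.range n, (u i + v i)) = fun n => x₀ - g n :=
      funext htel
    rw [this]
    simpa using (tendsto_const_nhds (x := x₀)).sub hg0
  have hxyz : x₀ = y + z :=
    tendsto_nhds_unique htend ((hy.add hz).tendsto_sum_nat)
  exact Submodule.mem_sup.mpr ⟨y, hyY, z, hzZ, hxyz.symm⟩
end

section
/- Let 1 < p < ∞ and let w : ℤ₊ → (0,∞) be a weight, where ℤ₊ = {0,1,2,...}. Define v : ℤ → (0,∞) by v_n := w_{|n|} for n ∈ ℤ. Then w belongs to the Muckenhoupt class A_p(ℤ₊) if and only if v belongs to A_p(ℤ) (and v is symmetric, i.e. v_{−k} = v_k for all k). -/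
/-- The Muckenhoupt ratio of the weight `w` over the interval `{l, ..., n}` of `ℤ₊ = ℕ`:
`(1/|J|) (∑_{k∈J} w_k^p)^{1/p} (∑_{k∈J} w_k^{-q})^{1/q}` with `J = {l,...,n}`. -/
noncomputable def apRatioN (p q : ℝ) (w : ℕ → ℝ) (l n : ℕ) : ℝ :=
  ((Finset.Icc l n).card : ℝ)⁻¹ * (∑ k ∈ Finset.Icc l n, w k ^ p) ^ (1 / p) *
    (∑ k ∈ Finset.Icc l n, w k ^ (-q)) ^ (1 / q)

/-- `w ∈ A_p(ℤ₊)`: the Muckenhoupt ratios over all intervals are uniformly bounded. -/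
def MemApN (p q : ℝ) (w : ℕ → ℝ) : Prop :=
  ∃ C : ℝ, ∀ l n : ℕ, l ≤ n → apRatioN p q w l n ≤ C

/-- The Muckenhoupt ratio of the weight `w` over the interval `{l, ..., n}` of `ℤ`. -/
noncomputable def apRatioZ (p q : ℝ) (w : ℤ → ℝ) (l n : ℤ) : ℝ :=
  ((Finset.Icc l n).card : ℝ)⁻¹ * (∑ k ∈ Finset.Icc l n, w k ^ p) ^ (1 / p) *
    (∑ k ∈ Finset.Icc l n, w k ^ (-q)) ^ (1 / q)

/-- `w ∈ A_p(ℤ)`: the Muckenhoupt ratios over all intervals are uniformly bounded. -/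
def MemApZ (p q : ℝ) (w : ℤ → ℝ) : Prop :=
  ∃ C : ℝ, ∀ l n : ℤ, l ≤ n → apRatioZ p q w l n ≤ C

/-!
On intervals of `ℤ₊` the ratios of `w` and of `v n = w |n|` coincide, and reflection
`k ↦ -k` preserves the ratios of `v`, which settles every interval of `ℤ` not containing both
signs. An interval `J = {l, …, n}` with `l ≤ 0 ≤ n` lies in `{-m, …, m}`, `m = max |l| n`, so
each of its two sums is at most twice the corresponding sum over `{0, …, m}`, while
`|J| ≥ m + 1`; hence the ratio of `v` over `J` is at most `2 ^ (1/p + 1/q) = 2` times the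
ratio of `w` over `{0, …, m}`.
-/

open Finset

section

variable {M : Type*} [AddCommMonoid M]

lemma sum_Icc_natCast_natAbs (f : ℕ → M) (l n : ℕ) :
    ∑ k ∈ Icc (l : ℤ) n, f k.natAbs = ∑ k ∈ Icc l n, f k := by
  refine sum_nbij' Int.natAbs Nat.cast ?_ ?_ ?_ ?_ ?_ <;>
    intro a ha <;> simp only [mem_Icc] at ha ⊢ <;> omega

lemma sum_Icc_neg (g : ℤ → M) (l n : ℤ) :
    ∑ k ∈ Icc (-n) (-l), g k = ∑ k ∈ Icc l n, g (-k) :=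
  sum_equiv (Equiv.neg ℤ) (fun k => by simp only [Equiv.neg_apply, mem_Icc]; omega)
    fun k _ => by rw [Equiv.neg_apply, neg_neg]

lemma sum_Icc_natAbs_le_two_mul {R : Type*} [Semiring R] [PartialOrder R] [IsOrderedRing R]
    {f : ℕ → R} (hf : ∀ k, 0 ≤ f k) {l n : ℤ} {m : ℕ}
    (hl : -(m : ℤ) ≤ l) (hn : n ≤ m) :
    ∑ k ∈ Icc l n, f k.natAbs ≤ 2 * ∑ k ∈ Icc 0 m, f k := by
  have hsub : Icc l n ⊆ Icc (-(m : ℤ)) 0 ∪ Icc 0 (m : ℤ) := by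
    intro k hk
    simp only [mem_union, mem_Icc] at hk ⊢
    omega
  calc ∑ k ∈ Icc l n, f k.natAbs
      ≤ ∑ k ∈ Icc (-(m : ℤ)) 0 ∪ Icc 0 (m : ℤ), f k.natAbs :=
        sum_le_sum_of_subset_of_nonneg hsub fun k _ _ => hf _
    _ ≤ ∑ k ∈ Icc (-(m : ℤ)) 0, f k.natAbs + ∑ k ∈ Icc 0 (m : ℤ), f k.natAbs := by
        rw [← sum_union_inter]
        exact le_add_of_nonneg_right (sum_nonneg fun k _ => hf _)
    _ = 2 * ∑ k ∈ Icc 0 m, f k := by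
        rw [← neg_zero, sum_Icc_neg, neg_zero, ← Nat.cast_zero, sum_Icc_natCast_natAbs]
        simp only [Int.natAbs_neg, sum_Icc_natCast_natAbs, two_mul]

variable {p q : ℝ} {w : ℕ → ℝ}

lemma apRatioZ_natAbs_natCast (l n : ℕ) :
    apRatioZ p q (fun k : ℤ => w k.natAbs) l n = apRatioN p q w l n := by
  rw [apRatioZ, apRatioN, sum_Icc_natCast_natAbs (fun k => w k ^ p),
    sum_Icc_natCast_natAbs (fun k => w k ^ (-q)), Int.card_Icc, Nat.card_Icc]
  congr 4
  omega

lemma apRatioZ_natAbs_neg (l n : ℤ) :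
    apRatioZ p q (fun k : ℤ => w k.natAbs) (-n) (-l) =
      apRatioZ p q (fun k : ℤ => w k.natAbs) l n := by
  rw [apRatioZ, apRatioZ, sum_Icc_neg (fun k => w k.natAbs ^ p),
    sum_Icc_neg (fun k => w k.natAbs ^ (-q)), Int.card_Icc, Int.card_Icc]
  simp only [Int.natAbs_neg]
  congr 4
  omega

lemma apRatioZ_natAbs_le_of_nonpos_of_nonneg (hw : ∀ k, 0 ≤ w k) (hp : 0 ≤ p) (hq : 0 ≤ q)
    {l n : ℤ} (hl : l ≤ 0) (hn : 0 ≤ n) :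
    apRatioZ p q (fun k : ℤ => w k.natAbs) l n ≤
      2 ^ (1 / p + 1 / q) * apRatioN p q w 0 (max l.natAbs n.natAbs) := by
  set m := max l.natAbs n.natAbs
  have hcard : (m : ℝ) + 1 ≤ #(Icc l n) := by
    have : m + 1 ≤ #(Icc l n) := by rw [Int.card_Icc]; omega
    exact_mod_cast this
  have hsum (r : ℝ) : ∑ k ∈ Icc l n, w k.natAbs ^ r ≤ 2 * ∑ k ∈ Icc 0 m, w k ^ r :=
    sum_Icc_natAbs_le_two_mul (fun k => Real.rpow_nonneg (hw k) r) (by omega) (by omega)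
  have hS (r : ℝ) : 0 ≤ ∑ k ∈ Icc 0 m, w k ^ r :=
    sum_nonneg fun k _ => Real.rpow_nonneg (hw k) r
  calc apRatioZ p q (fun k : ℤ => w k.natAbs) l n
      ≤ ((m : ℝ) + 1)⁻¹ * (2 * ∑ k ∈ Icc 0 m, w k ^ p) ^ (1 / p) *
          (2 * ∑ k ∈ Icc 0 m, w k ^ (-q)) ^ (1 / q) := by
        simp only [apRatioZ]
        gcongr
        all_goals first
          | exact hsum _
          | exact sum_nonneg fun k _ => Real.rpow_nonneg (hw _) _
          | exact Real.rpow_nonneg (sum_nonneg fun k _ => Real.rpow_nonneg (hw _) _) _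
          | exact mul_nonneg (by positivity) (Real.rpow_nonneg (mul_nonneg zero_le_two (hS _)) _)
    _ = 2 ^ (1 / p + 1 / q) * apRatioN p q w 0 m := by
        rw [apRatioN, Nat.card_Icc, Real.mul_rpow zero_le_two (hS p),
          Real.mul_rpow zero_le_two (hS (-q)), Real.rpow_add two_pos]
        push_cast
        ring

theorem MemApZ.memApN (h : MemApZ p q (fun n : ℤ => w n.natAbs)) : MemApN p q w := by
  obtain ⟨C, hC⟩ := h
  refine ⟨C, fun l n hln => ?_⟩
  rw [← apRatioZ_natAbs_natCast]
  exact hC l n (by exact_mod_cast hln)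

theorem MemApN.memApZ_natAbs (hw : ∀ k, 0 ≤ w k) (hp : 0 ≤ p) (hq : 0 ≤ q)
    (h : MemApN p q w) : MemApZ p q (fun n : ℤ => w n.natAbs) := by
  obtain ⟨C, hC⟩ := h
  have hC_of_nonneg {l n : ℤ} (hl : 0 ≤ l) (hln : l ≤ n) :
      apRatioZ p q (fun k : ℤ => w k.natAbs) l n ≤ C := by
    lift n to ℕ using hl.trans hln
    lift l to ℕ using hl
    rw [apRatioZ_natAbs_natCast]
    exact hC l n (by exact_mod_cast hln)
  refine ⟨max C (2 ^ (1 / p + 1 / q) * C), fun l n hln => ?_⟩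
  rcases le_total 0 l with hl | hl
  · exact (hC_of_nonneg hl hln).trans (le_max_left _ _)
  rcases le_total n 0 with hn | hn
  · rw [← apRatioZ_natAbs_neg]
    exact (hC_of_nonneg (neg_nonneg.2 hn) (neg_le_neg hln)).trans (le_max_left _ _)
  calc apRatioZ p q (fun k : ℤ => w k.natAbs) l n
      ≤ 2 ^ (1 / p + 1 / q) * apRatioN p q w 0 (max l.natAbs n.natAbs) :=
        apRatioZ_natAbs_le_of_nonpos_of_nonneg hw hp hq hl hn
    _ ≤ 2 ^ (1 / p + 1 / q) * C := by gcongr; exact hC _ _ (Nat.zero_le _)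
    _ ≤ _ := le_max_right _ _

end

/-- Let `1 < p < ∞` and let `w : ℤ₊ → (0,∞)` be a weight. Define `v : ℤ → (0,∞)` by
`v_n := w_{|n|}`. Then `w ∈ A_p(ℤ₊)` if and only if `v ∈ A_p(ℤ)` and `v` is symmetric. -/
theorem memApN_iff_symmetric_extension_memApZ (p : ℝ) (hp : 1 < p)
    (w : ℕ → ℝ) (hw : ∀ k, 0 < w k) :
    MemApN p (p / (p - 1)) w ↔
      (MemApZ p (p / (p - 1)) (fun n : ℤ => w n.natAbs) ∧
        ∀ k : ℤ, w (-k).natAbs = w k.natAbs) := by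
  have hq : 0 ≤ p / (p - 1) := div_nonneg (by linarith) (by linarith)
  exact ⟨fun h => ⟨h.memApZ_natAbs (fun k => (hw k).le) (by linarith) hq,
    fun k => by rw [Int.natAbs_neg]⟩, fun h => h.1.memApN⟩
end

section
/- Let 1 < p < ∞ and let w be a weight in the Muckenhoupt class A_p(ℤ₊). Then there exist constants δ > 0 and C > 0, depending only on p and w, such that for every interval R ⊂ ℤ₊ whose cardinality equals 2^r for some r ∈ ℕ, one has ((1/|R|) ∑_{k∈R} w_k^{p(1+δ)})^{1/(1+δ)} ≤ (C/|R|) ∑_{k∈R} w_k^p. -/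
open Finset

noncomputable section RHsection
open scoped Classical

namespace RHaux

/-- Dyadic block of length `2^s` starting at `l`. -/
def blk (l s : ℕ) : Finset ℕ := Finset.Icc l (l + 2 ^ s - 1)

lemma blk_card (l s : ℕ) : (blk l s).card = 2 ^ s := by
  have h : 1 ≤ 2 ^ s := Nat.one_le_two_pow
  simp only [blk, Nat.card_Icc]
  omega

lemma blk_card_real (l s : ℕ) : ((blk l s).card : ℝ) = 2 ^ s := by
  rw [blk_card]; push_cast; ring

lemma blk_nonempty (l s : ℕ) : (blk l s).Nonempty :=
  Finset.card_pos.mp (by rw [blk_card]; positivity)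

lemma blk_succ (l s : ℕ) : blk l (s + 1) = blk l s ∪ blk (l + 2 ^ s) s := by
  have h : 1 ≤ 2 ^ s := Nat.one_le_two_pow
  have h2 : 2 ^ (s + 1) = 2 ^ s + 2 ^ s := by ring
  ext x
  simp only [blk, mem_Icc, mem_union]
  omega

lemma blk_disj (l s : ℕ) : Disjoint (blk l s) (blk (l + 2 ^ s) s) := by
  have h : 1 ≤ 2 ^ s := Nat.one_le_two_pow
  rw [Finset.disjoint_left]
  intro a ha hb
  simp only [blk, mem_Icc] at ha hb
  omega

lemma blk_zero (l : ℕ) : blk l 0 = {l} := by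
  simp [blk]

/-- Calderón–Zygmund selected set at level `lam` inside `blk l s`. -/
def sel (u : ℕ → ℝ) (lam : ℝ) : ℕ → ℕ → Finset ℕ
  | 0, l => if lam * 2 ^ (0 : ℕ) < ∑ k ∈ blk l 0, u k then blk l 0 else ∅
  | s + 1, l =>
      if lam * 2 ^ (s + 1) < ∑ k ∈ blk l (s + 1), u k then blk l (s + 1)
      else sel u lam s l ∪ sel u lam s (l + 2 ^ s)

variable {u : ℕ → ℝ} {lam : ℝ}

lemma sel_of_lt {s l : ℕ} (h : lam * 2 ^ s < ∑ k ∈ blk l s, u k) :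
    sel u lam s l = blk l s := by
  cases s with
  | zero => simp only [sel]; rw [if_pos h]
  | succ s => simp only [sel]; rw [if_pos h]

lemma sel_zero_of_le {l : ℕ} (h : ¬ lam * 2 ^ (0 : ℕ) < ∑ k ∈ blk l 0, u k) :
    sel u lam 0 l = ∅ := by
  simp only [sel]; rw [if_neg h]

lemma sel_succ_of_le {s l : ℕ} (h : ¬ lam * 2 ^ (s + 1) < ∑ k ∈ blk l (s + 1), u k) :
    sel u lam (s + 1) l = sel u lam s l ∪ sel u lam s (l + 2 ^ s) := by
  simp only [sel]; rw [if_neg h]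

lemma sel_subset {s l : ℕ} : sel u lam s l ⊆ blk l s := by
  induction s generalizing l with
  | zero =>
      by_cases h : lam * 2 ^ (0 : ℕ) < ∑ k ∈ blk l 0, u k
      · rw [sel_of_lt h]
      · rw [sel_zero_of_le h]; exact Finset.empty_subset _
  | succ s ih =>
      by_cases h : lam * 2 ^ (s + 1) < ∑ k ∈ blk l (s + 1), u k
      · rw [sel_of_lt h]
      · rw [sel_succ_of_le h, blk_succ]
        exact Finset.union_subset_union ih ih

lemma sel_disj {s l : ℕ} : Disjoint (sel u lam s l) (sel u lam s (l + 2 ^ s)) :=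
  (blk_disj l s).mono sel_subset sel_subset

lemma sum_blk_succ (u : ℕ → ℝ) (l s : ℕ) :
    ∑ k ∈ blk l (s + 1), u k = ∑ k ∈ blk l s, u k + ∑ k ∈ blk (l + 2 ^ s) s, u k := by
  rw [blk_succ, Finset.sum_union (blk_disj l s)]

/-- Every selected set has average `> lam`. -/
lemma sel_lower (u : ℕ → ℝ) (lam : ℝ) (s l : ℕ) :
    lam * (sel u lam s l).card ≤ ∑ k ∈ sel u lam s l, u k := by
  induction s generalizing l with
  | zero =>
      by_cases h : lam * 2 ^ (0 : ℕ) < ∑ k ∈ blk l 0, u k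
      · rw [sel_of_lt h, blk_card_real]
        exact h.le
      · rw [sel_zero_of_le h]; simp
  | succ s ih =>
      by_cases h : lam * 2 ^ (s + 1) < ∑ k ∈ blk l (s + 1), u k
      · rw [sel_of_lt h, blk_card_real]
        exact h.le
      · rw [sel_succ_of_le h, Finset.sum_union sel_disj,
          Finset.card_union_of_disjoint sel_disj]
        push_cast
        rw [mul_add]
        exact add_le_add (ih l) (ih (l + 2 ^ s))


section WithPos

variable (hu : ∀ k, 0 < u k)
include hu

lemma blk_sum_pos (l s : ℕ) : 0 < ∑ k ∈ blk l s, u k :=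
  Finset.sum_pos (fun k _ => hu k) (blk_nonempty l s)

lemma sum_subset_le {E F : Finset ℕ} (hEF : E ⊆ F) :
    ∑ k ∈ E, u k ≤ ∑ k ∈ F, u k :=
  Finset.sum_le_sum_of_subset_of_nonneg hEF (fun k _ _ => (hu k).le)

lemma child_sum_le (l s : ℕ) {c : ℕ} (hc : c = l ∨ c = l + 2 ^ s) :
    ∑ k ∈ blk c s, u k ≤ ∑ k ∈ blk l (s + 1), u k := by
  rw [sum_blk_succ]
  have h1 : 0 ≤ ∑ k ∈ blk l s, u k := (blk_sum_pos hu l s).le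
  have h2 : 0 ≤ ∑ k ∈ blk (l + 2 ^ s) s, u k := (blk_sum_pos hu (l + 2 ^ s) s).le
  rcases hc with rfl | rfl <;> linarith

/-- Each maximal selected interval has average at most `2 lam`
(provided the root average is at most `lam`). -/
lemma sel_sum_le {s l : ℕ} (hle : ∑ k ∈ blk l s, u k ≤ lam * 2 ^ s) :
    ∑ k ∈ sel u lam s l, u k ≤ 2 * lam * (sel u lam s l).card := by
  induction s generalizing l with
  | zero =>
      rw [sel_zero_of_le (not_lt.mpr hle)]
      simp
  | succ s ih =>
      have h : ¬ lam * 2 ^ (s + 1) < ∑ k ∈ blk l (s + 1), u k := not_lt.mpr hle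
      rw [sel_succ_of_le h, Finset.sum_union sel_disj,
        Finset.card_union_of_disjoint sel_disj]
      have key : ∀ c, (c = l ∨ c = l + 2 ^ s) →
          ∑ k ∈ sel u lam s c, u k ≤ 2 * lam * (sel u lam s c).card := by
        intro c hc
        by_cases hcs : ∑ k ∈ blk c s, u k ≤ lam * 2 ^ s
        · exact ih hcs
        · push_neg at hcs
          rw [sel_of_lt hcs, blk_card_real]
          have h1 := child_sum_le hu l s hc
          have h2 : lam * 2 ^ (s + 1) = 2 * lam * 2 ^ s := by ring
          linarith
      push_cast
      rw [mul_add]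
      exact add_le_add (key l (Or.inl rfl)) (key (l + 2 ^ s) (Or.inr rfl))

/-- Points where `u` exceeds `lam` lie in the selected set. -/
lemma mem_sel_of_lt {s l k : ℕ} (hk : k ∈ blk l s) (hlam : lam < u k) :
    k ∈ sel u lam s l := by
  induction s generalizing l with
  | zero =>
      by_cases h : lam * 2 ^ (0 : ℕ) < ∑ k ∈ blk l 0, u k
      · rw [sel_of_lt h]; exact hk
      · exfalso
        rw [blk_zero, Finset.mem_singleton] at hk
        subst hk
        rw [blk_zero, Finset.sum_singleton] at h
        push_neg at h
        simp only [pow_zero, mul_one] at h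
        linarith
  | succ s ih =>
      by_cases h : lam * 2 ^ (s + 1) < ∑ k ∈ blk l (s + 1), u k
      · rw [sel_of_lt h]; exact hk
      · rw [sel_succ_of_le h]
        rw [blk_succ, Finset.mem_union] at hk
        rcases hk with hk | hk
        · exact Finset.mem_union_left _ (ih hk)
        · exact Finset.mem_union_right _ (ih hk)

end WithPos

/-- The decay factor. -/
def theta (p A : ℝ) : ℝ := 1 - 2 ^ (-p) / A

lemma theta_pos {p A : ℝ} (hp : 0 < p) (hA : 1 ≤ A) : 0 < theta p A := by
  have h1 : (2:ℝ) ^ (-p) < 1 :=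
    Real.rpow_lt_one_of_one_lt_of_neg one_lt_two (neg_lt_zero.mpr hp)
  have h2 : (2:ℝ) ^ (-p) / A ≤ (2:ℝ) ^ (-p) :=
    div_le_self (Real.rpow_nonneg (by norm_num) _) hA
  unfold theta; linarith

lemma theta_lt_one {p A : ℝ} (hA : 1 ≤ A) : theta p A < 1 := by
  have h1 : 0 < (2:ℝ) ^ (-p) := Real.rpow_pos_of_pos (by norm_num) _
  have h2 : 0 < (2:ℝ) ^ (-p) / A := div_pos h1 (lt_of_lt_of_le one_pos hA)
  unfold theta; linarith

/-- Geometric series bound. -/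
lemma geom_le {t : ℝ} (ht0 : 0 ≤ t) (ht1 : t < 1) (n : ℕ) :
    ∑ m ∈ Finset.range n, t ^ m ≤ (1 - t)⁻¹ := by
  have h : 0 < 1 - t := by linarith
  have heq : ∑ m ∈ Finset.range n, t ^ m = (1 - t ^ n) / (1 - t) := by
    rw [geom_sum_eq (by intro he; rw [he] at ht1; exact lt_irrefl 1 ht1) n]
    rw [div_eq_div_iff (by linarith) (by linarith)]
    ring
  rw [heq, div_le_iff₀ h, inv_mul_cancel₀ h.ne']
  linarith [pow_nonneg ht0 n]

section Main

variable {p A : ℝ} (hu : ∀ k, 0 < u k) (hp : 1 < p) (hA : 1 ≤ A)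
variable (hAinf : ∀ (l s : ℕ) (E : Finset ℕ), E ⊆ blk l s →
    (∑ k ∈ blk l s, u k) * (E.card : ℝ) ^ p ≤
      A * (∑ k ∈ E, u k) * (((2:ℝ) ^ s) ^ p))

include hu hp hA hAinf

/-- Key decay step: if the block has average at most `2 lam`, the part selected at
level `4 lam` carries at most a `theta` fraction of the mass. -/
lemma selC {lam : ℝ} (hlam : 0 < lam) {l s : ℕ}
    (hle : ∑ k ∈ blk l s, u k ≤ 2 * lam * 2 ^ s) :
    ∑ k ∈ sel u (4 * lam) s l, u k ≤ theta p A * ∑ k ∈ blk l s, u k := by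
  set S := sel u (4 * lam) s l with hS
  have hSsub : S ⊆ blk l s := sel_subset
  set E := blk l s \ S with hE
  have hEsub : E ⊆ blk l s := Finset.sdiff_subset
  -- cardinality of S is small
  have h1 : 4 * lam * (S.card : ℝ) ≤ ∑ k ∈ S, u k := sel_lower u (4 * lam) s l
  have h2 : ∑ k ∈ S, u k ≤ ∑ k ∈ blk l s, u k := sum_subset_le hu hSsub
  have hScard : (S.card : ℝ) ≤ 2 ^ s / 2 := by nlinarith
  have hEcard : ((E.card : ℕ) : ℝ) = 2 ^ s - S.card := by
    rw [hE, Finset.card_sdiff_of_subset hSsub, blk_card]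
    have := Finset.card_le_card hSsub
    rw [blk_card] at this
    push_cast [Nat.cast_sub this]
    ring
  have hEcard2 : (2:ℝ) ^ s / 2 ≤ (E.card : ℝ) := by rw [hEcard]; linarith
  -- A_infinity estimate
  have hAE := hAinf l s E hEsub
  have hpow : ((2:ℝ) ^ s) ^ p * 2 ^ (-p) ≤ ((E.card : ℝ)) ^ p := by
    have hhalf : ((2:ℝ) ^ s / 2) ^ p ≤ (E.card : ℝ) ^ p :=
      Real.rpow_le_rpow (by positivity) hEcard2 (by linarith)
    have : ((2:ℝ) ^ s / 2) ^ p = ((2:ℝ) ^ s) ^ p * 2 ^ (-p) := by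
      rw [Real.div_rpow (by positivity) (by norm_num), Real.rpow_neg (by norm_num)]
      ring
    linarith [this ▸ hhalf]
  have hblkpos : 0 < ∑ k ∈ blk l s, u k := blk_sum_pos hu l s
  have htp : (0:ℝ) < ((2:ℝ) ^ s) ^ p := by positivity
  have hEmass : (∑ k ∈ blk l s, u k) * 2 ^ (-p) ≤ A * ∑ k ∈ E, u k := by
    have hchain : ((∑ k ∈ blk l s, u k) * 2 ^ (-p)) * ((2:ℝ) ^ s) ^ p ≤
        (A * ∑ k ∈ E, u k) * ((2:ℝ) ^ s) ^ p := by
      calc ((∑ k ∈ blk l s, u k) * 2 ^ (-p)) * ((2:ℝ) ^ s) ^ p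
          = (∑ k ∈ blk l s, u k) * (((2:ℝ) ^ s) ^ p * 2 ^ (-p)) := by ring
        _ ≤ (∑ k ∈ blk l s, u k) * (E.card : ℝ) ^ p :=
            mul_le_mul_of_nonneg_left hpow hblkpos.le
        _ ≤ A * (∑ k ∈ E, u k) * ((2:ℝ) ^ s) ^ p := hAE
        _ = (A * ∑ k ∈ E, u k) * ((2:ℝ) ^ s) ^ p := by ring
    exact le_of_mul_le_mul_right hchain htp
  have hsplit : ∑ k ∈ E, u k + ∑ k ∈ S, u k = ∑ k ∈ blk l s, u k :=
    Finset.sum_sdiff hSsub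
  have hApos : (0:ℝ) < A := lt_of_lt_of_le one_pos hA
  have hEge : (∑ k ∈ blk l s, u k) * 2 ^ (-p) / A ≤ ∑ k ∈ E, u k := by
    rw [div_le_iff₀ hApos]
    linarith [hEmass]
  unfold theta
  rw [sub_mul, one_mul]
  have hx : 2 ^ (-p) / A * ∑ k ∈ blk l s, u k = (∑ k ∈ blk l s, u k) * 2 ^ (-p) / A := by
    ring
  linarith [hEge]

/-- Good-lambda decay step. -/
lemma selB {lam : ℝ} (hlam : 0 < lam) {s l : ℕ}
    (hle : ∑ k ∈ blk l s, u k ≤ lam * 2 ^ s) :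
    ∑ k ∈ sel u (4 * lam) s l, u k ≤ theta p A * ∑ k ∈ sel u lam s l, u k := by
  induction s generalizing l with
  | zero =>
      have h0 : ¬ lam * 2 ^ (0 : ℕ) < ∑ k ∈ blk l 0, u k := not_lt.mpr hle
      have h4 : ¬ 4 * lam * 2 ^ (0 : ℕ) < ∑ k ∈ blk l 0, u k := by
        push_neg at h0 ⊢
        nlinarith
      rw [sel_zero_of_le h0, sel_zero_of_le h4]
      simp
  | succ s ih =>
      have h0 : ¬ lam * 2 ^ (s + 1) < ∑ k ∈ blk l (s + 1), u k := not_lt.mpr hle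
      have h4 : ¬ 4 * lam * 2 ^ (s + 1) < ∑ k ∈ blk l (s + 1), u k := by
        push_neg at h0 ⊢
        nlinarith [h0, pow_pos (show (0:ℝ) < 2 by norm_num) (s + 1)]
      rw [sel_succ_of_le h0, sel_succ_of_le h4, Finset.sum_union sel_disj,
        Finset.sum_union sel_disj, mul_add]
      have key : ∀ c, (c = l ∨ c = l + 2 ^ s) →
          ∑ k ∈ sel u (4 * lam) s c, u k ≤ theta p A * ∑ k ∈ sel u lam s c, u k := by
        intro c hc
        by_cases hcs : ∑ k ∈ blk c s, u k ≤ lam * 2 ^ s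
        · exact ih hcs
        · push_neg at hcs
          rw [sel_of_lt hcs]
          apply selC hu hp hA hAinf hlam
          have h1 := child_sum_le hu l s hc
          have h2 : lam * 2 ^ (s + 1) = 2 * lam * 2 ^ s := by ring
          linarith
      exact add_le_add (key l (Or.inl rfl)) (key (l + 2 ^ s) (Or.inr rfl))

/-- Iterated decay. -/
lemma sel_iter {lam0 : ℝ} (hlam0 : 0 < lam0) {s l : ℕ}
    (hle : ∑ k ∈ blk l s, u k ≤ lam0 * 2 ^ s) (m : ℕ) :
    ∑ k ∈ sel u (4 ^ m * lam0) s l, u k ≤ theta p A ^ m * ∑ k ∈ blk l s, u k := by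
  induction m with
  | zero =>
      simp only [pow_zero, one_mul]
      exact sum_subset_le hu sel_subset
  | succ m ihm =>
      have h4 : (4:ℝ) ^ (m + 1) * lam0 = 4 * (4 ^ m * lam0) := by ring
      have hl4 : 0 < (4:ℝ) ^ m * lam0 := by positivity
      have hle4 : ∑ k ∈ blk l s, u k ≤ (4 ^ m * lam0) * 2 ^ s := by
        have h1 : (1:ℝ) ≤ 4 ^ m := one_le_pow₀ (by norm_num)
        have h2 : (0:ℝ) ≤ 2 ^ s := by positivity
        have h3 := mul_le_mul_of_nonneg_right (mul_le_mul_of_nonneg_right h1 hlam0.le) h2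
        rw [one_mul] at h3
        linarith
      rw [h4]
      calc ∑ k ∈ sel u (4 * (4 ^ m * lam0)) s l, u k
          ≤ theta p A * ∑ k ∈ sel u (4 ^ m * lam0) s l, u k := selB hu hp hA hAinf hl4 hle4
        _ ≤ theta p A * (theta p A ^ m * ∑ k ∈ blk l s, u k) :=
            mul_le_mul_of_nonneg_left ihm (theta_pos (lt_trans one_pos hp) hA).le
        _ = theta p A ^ (m + 1) * ∑ k ∈ blk l s, u k := by ring

/-- Mass of high level sets decays geometrically. -/
lemma level_sum_le {lam0 : ℝ} (hlam0 : 0 < lam0) {s l : ℕ}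
    (hle : ∑ k ∈ blk l s, u k ≤ lam0 * 2 ^ s) (m : ℕ) :
    ∑ k ∈ (blk l s).filter (fun k => 4 ^ m * lam0 < u k), u k ≤
      theta p A ^ m * ∑ k ∈ blk l s, u k := by
  refine le_trans (sum_subset_le hu ?_) (sel_iter hu hp hA hAinf hlam0 hle m)
  intro k hk
  rw [Finset.mem_filter] at hk
  exact mem_sel_of_lt hu hk.1 hk.2

/-- The core reverse Hölder bound for the auxiliary weight `u` over a dyadic block. -/
lemma core_sum {δ τ : ℝ} (hδ : 0 < δ) (hτ0 : 0 ≤ τ) (hτ1 : τ < 1)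
    (hτ : (4:ℝ) ^ δ * theta p A ≤ τ) (l s : ℕ) {lam0 : ℝ}
    (hlam0 : lam0 = (∑ k ∈ blk l s, u k) / 2 ^ s) :
    ∑ k ∈ blk l s, u k ^ (1 + δ) ≤
      (1 - τ)⁻¹ * (4 * lam0) ^ δ * ∑ k ∈ blk l s, u k := by
  have hTpos : 0 < ∑ k ∈ blk l s, u k := blk_sum_pos hu l s
  have h2s : (0:ℝ) < 2 ^ s := by positivity
  have hlampos : 0 < lam0 := by rw [hlam0]; exact div_pos hTpos h2s
  have hle : ∑ k ∈ blk l s, u k = lam0 * 2 ^ s := by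
    rw [hlam0]; field_simp
  have hθ0 : 0 ≤ theta p A := (theta_pos (lt_trans one_pos hp) hA).le
  set G : ℕ → ℕ → ℝ := fun m k =>
    if (m = 0 ∨ 4 ^ m * lam0 < u k) ∧ u k ≤ 4 ^ (m + 1) * lam0 then
      (4 ^ (m + 1) * lam0) ^ δ * u k else 0 with hG
  have hGnonneg : ∀ m k, 0 ≤ G m k := by
    intro m k
    rw [hG]
    dsimp only
    split
    · exact mul_nonneg (Real.rpow_nonneg (by positivity) _) (hu k).le
    · exact le_refl 0
  -- pointwise layer bound
  have hpoint : ∀ k ∈ blk l s, u k ^ (1 + δ) ≤ ∑ m ∈ Finset.range (s + 1), G m k := by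
    intro k hk
    have hukT : u k ≤ ∑ k ∈ blk l s, u k :=
      Finset.single_le_sum (fun i _ => (hu i).le) hk
    have h24 : (2:ℝ) ^ s ≤ 4 ^ s := pow_le_pow_left₀ (by norm_num) (by norm_num) s
    have hPs : u k ≤ 4 ^ (s + 1) * lam0 := by
      have h1 : u k ≤ lam0 * 4 ^ s := by
        rw [hle] at hukT
        nlinarith
      have h2 : (4:ℝ) ^ s ≤ 4 ^ (s + 1) := by
        rw [pow_succ]
        nlinarith [pow_pos (show (0:ℝ) < 4 by norm_num) s]
      nlinarith
    have hex : ∃ m, u k ≤ 4 ^ (m + 1) * lam0 := ⟨s, hPs⟩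
    set m := Nat.find hex with hmdef
    have hm : u k ≤ 4 ^ (m + 1) * lam0 := Nat.find_spec hex
    have hms : m ≤ s := Nat.find_le hPs
    have hcond : (m = 0 ∨ 4 ^ m * lam0 < u k) := by
      rcases Nat.eq_zero_or_pos m with h0 | hpos
      · exact Or.inl h0
      · right
        obtain ⟨m', hm'⟩ : ∃ m', m = m' + 1 := ⟨m - 1, by omega⟩
        have hlt : m' < Nat.find hex := by omega
        have hmin := Nat.find_min hex hlt
        push_neg at hmin
        rw [hm']
        exact hmin
    have hGm : u k ^ (1 + δ) ≤ G m k := by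
      rw [hG]
      dsimp only
      rw [if_pos ⟨hcond, hm⟩]
      have e1 : u k ^ (1 + δ) = u k * u k ^ δ := by
        rw [Real.rpow_add (hu k), Real.rpow_one]
      have e2 : u k ^ δ ≤ (4 ^ (m + 1) * lam0) ^ δ :=
        Real.rpow_le_rpow (hu k).le hm hδ.le
      calc u k ^ (1 + δ) = u k * u k ^ δ := e1
        _ ≤ u k * (4 ^ (m + 1) * lam0) ^ δ :=
            mul_le_mul_of_nonneg_left e2 (hu k).le
        _ = (4 ^ (m + 1) * lam0) ^ δ * u k := by ring
    calc u k ^ (1 + δ) ≤ G m k := hGm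
      _ ≤ ∑ m ∈ Finset.range (s + 1), G m k :=
          Finset.single_le_sum (fun i _ => hGnonneg i k)
            (Finset.mem_range.mpr (by omega))
  -- slice bound
  have hslice : ∀ m, ∑ k ∈ blk l s, G m k ≤
      (4 * lam0) ^ δ * ((4:ℝ) ^ δ * theta p A) ^ m * ∑ k ∈ blk l s, u k := by
    intro m
    have hfil : ∑ k ∈ blk l s, G m k =
        (4 ^ (m + 1) * lam0) ^ δ *
          ∑ k ∈ (blk l s).filter
            (fun k => (m = 0 ∨ 4 ^ m * lam0 < u k) ∧ u k ≤ 4 ^ (m + 1) * lam0), u k := by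
      rw [Finset.mul_sum, Finset.sum_filter]
    have hmass : ∑ k ∈ (blk l s).filter
          (fun k => (m = 0 ∨ 4 ^ m * lam0 < u k) ∧ u k ≤ 4 ^ (m + 1) * lam0), u k ≤
        theta p A ^ m * ∑ k ∈ blk l s, u k := by
      rcases Nat.eq_zero_or_pos m with h0 | hpos
      · subst h0
        simp only [pow_zero, one_mul]
        exact sum_subset_le hu (Finset.filter_subset _ _)
      · refine le_trans (sum_subset_le hu ?_)
          (level_sum_le hu hp hA hAinf hlampos (le_of_eq hle) m)
        intro k hk
        rw [Finset.mem_filter] at hk ⊢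
        refine ⟨hk.1, ?_⟩
        rcases hk.2.1 with h | h
        · omega
        · exact h
    have hcδ : (4 ^ (m + 1) * lam0 : ℝ) ^ δ =
        (4 * lam0) ^ δ * ((4:ℝ) ^ δ) ^ m := by
      have e1 : (4:ℝ) ^ (m + 1) * lam0 = (4 * lam0) * 4 ^ m := by ring
      have e2 : ((4:ℝ) ^ m) ^ δ = ((4:ℝ) ^ δ) ^ m := by
        rw [← Real.rpow_natCast 4 m, ← Real.rpow_natCast ((4:ℝ) ^ δ) m,
          ← Real.rpow_mul (by norm_num), ← Real.rpow_mul (by norm_num), mul_comm]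
      rw [e1, Real.mul_rpow (by positivity) (by positivity), e2]
    calc ∑ k ∈ blk l s, G m k
        = (4 ^ (m + 1) * lam0) ^ δ * ∑ k ∈ (blk l s).filter _, u k := hfil
      _ ≤ (4 ^ (m + 1) * lam0) ^ δ * (theta p A ^ m * ∑ k ∈ blk l s, u k) :=
          mul_le_mul_of_nonneg_left hmass (Real.rpow_nonneg (by positivity) _)
      _ = (4 * lam0) ^ δ * ((4:ℝ) ^ δ * theta p A) ^ m * ∑ k ∈ blk l s, u k := by
          rw [hcδ, mul_pow]
          ring
  -- assemble
  have h4δθ : 0 ≤ (4:ℝ) ^ δ * theta p A :=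
    mul_nonneg (Real.rpow_nonneg (by norm_num) _) hθ0
  calc ∑ k ∈ blk l s, u k ^ (1 + δ)
      ≤ ∑ k ∈ blk l s, ∑ m ∈ Finset.range (s + 1), G m k :=
        Finset.sum_le_sum hpoint
    _ = ∑ m ∈ Finset.range (s + 1), ∑ k ∈ blk l s, G m k := Finset.sum_comm
    _ ≤ ∑ m ∈ Finset.range (s + 1),
          (4 * lam0) ^ δ * ((4:ℝ) ^ δ * theta p A) ^ m * ∑ k ∈ blk l s, u k :=
        Finset.sum_le_sum (fun m _ => hslice m)
    _ = ((4 * lam0) ^ δ * ∑ k ∈ blk l s, u k) *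
          ∑ m ∈ Finset.range (s + 1), ((4:ℝ) ^ δ * theta p A) ^ m := by
        rw [Finset.mul_sum]
        exact Finset.sum_congr rfl (fun m _ => by ring)
    _ ≤ ((4 * lam0) ^ δ * ∑ k ∈ blk l s, u k) * (1 - τ)⁻¹ := by
        apply mul_le_mul_of_nonneg_left _
          (mul_nonneg (Real.rpow_nonneg (by positivity) _) hTpos.le)
        calc ∑ m ∈ Finset.range (s + 1), ((4:ℝ) ^ δ * theta p A) ^ m
            ≤ ∑ m ∈ Finset.range (s + 1), τ ^ m :=
              Finset.sum_le_sum (fun m _ => pow_le_pow_left₀ h4δθ hτ m)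
          _ ≤ (1 - τ)⁻¹ := geom_le hτ0 hτ1 _
    _ = (1 - τ)⁻¹ * (4 * lam0) ^ δ * ∑ k ∈ blk l s, u k := by ring

/-- Final normalized form of the reverse Hölder inequality over a block. -/
lemma core_final {δ τ C : ℝ} (hδ : 0 < δ) (hτ0 : 0 ≤ τ) (hτ1 : τ < 1)
    (hτ : (4:ℝ) ^ δ * theta p A ≤ τ)
    (hC : max ((1 - τ)⁻¹ * 4 ^ δ) 1 ≤ C) (l s : ℕ) :
    (((2:ℝ) ^ s)⁻¹ * ∑ k ∈ blk l s, u k ^ (1 + δ)) ^ (1 / (1 + δ)) ≤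
      C * (((2:ℝ) ^ s)⁻¹ * ∑ k ∈ blk l s, u k) := by
  have hTpos : 0 < ∑ k ∈ blk l s, u k := blk_sum_pos hu l s
  have h2s : (0:ℝ) < 2 ^ s := by positivity
  set lam0 : ℝ := (∑ k ∈ blk l s, u k) / 2 ^ s with hlam0
  have hlampos : 0 < lam0 := div_pos hTpos h2s
  have hcore := core_sum hu hp hA hAinf hδ hτ0 hτ1 hτ l s hlam0
  have h1τ : 0 < 1 - τ := by linarith
  set K : ℝ := (1 - τ)⁻¹ * 4 ^ δ with hK
  have hKnonneg : 0 ≤ K := mul_nonneg (inv_nonneg.mpr h1τ.le) (Real.rpow_nonneg (by norm_num) _)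
  have h1δ : (0:ℝ) < 1 + δ := by linarith
  -- rewrite the average bound
  have havg : ((2:ℝ) ^ s)⁻¹ * ∑ k ∈ blk l s, u k ^ (1 + δ) ≤ K * lam0 ^ (1 + δ) := by
    have e1 : (4 * lam0 : ℝ) ^ δ = 4 ^ δ * lam0 ^ δ :=
      Real.mul_rpow (by norm_num) hlampos.le
    have e2 : lam0 ^ (1 + δ) = lam0 * lam0 ^ δ := by
      rw [Real.rpow_add hlampos, Real.rpow_one]
    have e3 : ((2:ℝ) ^ s)⁻¹ * ∑ k ∈ blk l s, u k = lam0 := by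
      rw [hlam0]; ring
    calc ((2:ℝ) ^ s)⁻¹ * ∑ k ∈ blk l s, u k ^ (1 + δ)
        ≤ ((2:ℝ) ^ s)⁻¹ * ((1 - τ)⁻¹ * (4 * lam0) ^ δ * ∑ k ∈ blk l s, u k) :=
          mul_le_mul_of_nonneg_left hcore (inv_nonneg.mpr h2s.le)
      _ = (1 - τ)⁻¹ * (4 * lam0) ^ δ * (((2:ℝ) ^ s)⁻¹ * ∑ k ∈ blk l s, u k) := by ring
      _ = (1 - τ)⁻¹ * (4 ^ δ * lam0 ^ δ) * lam0 := by rw [e1, e3]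
      _ = K * lam0 ^ (1 + δ) := by rw [e2, hK]; ring
  -- take the (1/(1+δ))-th power
  have hLHSnonneg : 0 ≤ ((2:ℝ) ^ s)⁻¹ * ∑ k ∈ blk l s, u k ^ (1 + δ) := by
    apply mul_nonneg (inv_nonneg.mpr h2s.le)
    exact Finset.sum_nonneg (fun k _ => Real.rpow_nonneg (hu k).le _)
  have hmono := Real.rpow_le_rpow hLHSnonneg havg (by positivity : (0:ℝ) ≤ 1 / (1 + δ))
  have hKlam : (K * lam0 ^ (1 + δ)) ^ (1 / (1 + δ)) = K ^ (1 / (1 + δ)) * lam0 := by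
    rw [Real.mul_rpow hKnonneg (Real.rpow_nonneg hlampos.le _),
      ← Real.rpow_mul hlampos.le, mul_one_div_cancel h1δ.ne', Real.rpow_one]
  have hKe : K ^ (1 / (1 + δ)) ≤ C := by
    rcases le_total K 1 with h | h
    · refine le_trans (Real.rpow_le_one hKnonneg h (by positivity)) ?_
      exact le_trans (le_max_right _ _) hC
    · have h1 : K ^ (1 / (1 + δ)) ≤ K ^ (1:ℝ) := by
        apply Real.rpow_le_rpow_of_exponent_le h
        rw [div_le_one h1δ]
        linarith
      rw [Real.rpow_one] at h1
      exact le_trans h1 (le_trans (le_max_left _ _) hC)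
  have e3 : ((2:ℝ) ^ s)⁻¹ * ∑ k ∈ blk l s, u k = lam0 := by
    rw [hlam0]; ring
  calc (((2:ℝ) ^ s)⁻¹ * ∑ k ∈ blk l s, u k ^ (1 + δ)) ^ (1 / (1 + δ))
      ≤ (K * lam0 ^ (1 + δ)) ^ (1 / (1 + δ)) := hmono
    _ = K ^ (1 / (1 + δ)) * lam0 := hKlam
    _ ≤ C * lam0 := mul_le_mul_of_nonneg_right hKe hlampos.le
    _ = C * (((2:ℝ) ^ s)⁻¹ * ∑ k ∈ blk l s, u k) := by rw [e3]

end Main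

/-- The `A_p` condition implies the quantitative `A_∞` estimate on blocks. -/
lemma ainf_of_ap {p q A₀ : ℝ} (hp : 1 < p) (hq : q = p / (p - 1)) {w : ℕ → ℝ}
    (hw : ∀ k, 0 < w k) (hA₀ : 1 ≤ A₀)
    (hAp : ∀ l n : ℕ, l ≤ n → apRatioN p q w l n ≤ A₀) (l s : ℕ)
    (E : Finset ℕ) (hE : E ⊆ blk l s) :
    (∑ k ∈ blk l s, w k ^ p) * (E.card : ℝ) ^ p ≤
      A₀ ^ p * (∑ k ∈ E, w k ^ p) * ((2:ℝ) ^ s) ^ p := by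
  have hp0 : (0:ℝ) < p := lt_trans one_pos hp
  have hpq : p.HolderConjugate q := hq ▸ Real.HolderConjugate.conjExponent hp
  have hq0 : (0:ℝ) < q := hpq.symm.pos
  have h2pow : 1 ≤ 2 ^ s := Nat.one_le_two_pow
  have hln : l ≤ l + 2 ^ s - 1 := by omega
  have hblk : blk l s = Finset.Icc l (l + 2 ^ s - 1) := rfl
  set n := l + 2 ^ s - 1 with hn
  have h2s : (0:ℝ) < 2 ^ s := by positivity
  -- positivity of the sums over the whole block
  have hPsum : 0 < ∑ k ∈ Finset.Icc l n, w k ^ p :=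
    Finset.sum_pos (fun k _ => Real.rpow_pos_of_pos (hw k) p)
      (hblk ▸ blk_nonempty l s)
  have hQsum : 0 < ∑ k ∈ Finset.Icc l n, w k ^ (-q) :=
    Finset.sum_pos (fun k _ => Real.rpow_pos_of_pos (hw k) (-q))
      (hblk ▸ blk_nonempty l s)
  set P : ℝ := (∑ k ∈ Finset.Icc l n, w k ^ p) ^ (1 / p) with hPdef
  set Q : ℝ := (∑ k ∈ Finset.Icc l n, w k ^ (-q)) ^ (1 / q) with hQdef
  have hPpos : 0 < P := Real.rpow_pos_of_pos hPsum _
  have hQpos : 0 < Q := Real.rpow_pos_of_pos hQsum _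
  -- the A_p hypothesis
  have hap := hAp l n hln
  rw [apRatioN] at hap
  have hcard : ((Finset.Icc l n).card : ℝ) = 2 ^ s := hblk ▸ blk_card_real l s
  rw [hcard] at hap
  have hQle : Q ≤ A₀ * 2 ^ s / P := by
    rw [le_div_iff₀ hPpos]
    have e : Q * P = 2 ^ s * (((2:ℝ) ^ s)⁻¹ * P * Q) := by
      field_simp
    rw [e]
    calc 2 ^ s * (((2:ℝ) ^ s)⁻¹ * P * Q) ≤ 2 ^ s * A₀ :=
          mul_le_mul_of_nonneg_left hap h2s.le
      _ = A₀ * 2 ^ s := by ring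
  -- Hölder on E
  have hhold := Real.inner_le_Lp_mul_Lq_of_nonneg E hpq
    (f := w) (g := fun k => (w k)⁻¹)
    (fun k _ => (hw k).le) (fun k _ => (inv_pos.mpr (hw k)).le)
  have hlhs : ∑ k ∈ E, w k * (w k)⁻¹ = (E.card : ℝ) := by
    rw [Finset.sum_congr rfl (fun k _ => mul_inv_cancel₀ (hw k).ne')]
    simp
  have hinv : ∑ k ∈ E, ((w k)⁻¹) ^ q = ∑ k ∈ E, w k ^ (-q) :=
    Finset.sum_congr rfl (fun k _ => by
      rw [Real.inv_rpow (hw k).le, Real.rpow_neg (hw k).le])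
  rw [hlhs] at hhold
  have hQE : (∑ k ∈ E, ((w k)⁻¹) ^ q) ^ (1 / q) ≤ Q := by
    rw [hinv, hQdef]
    apply Real.rpow_le_rpow
      (Finset.sum_nonneg (fun k _ => (Real.rpow_pos_of_pos (hw k) _).le))
      _ (by positivity)
    apply Finset.sum_le_sum_of_subset_of_nonneg (hblk ▸ hE)
    exact fun k _ _ => (Real.rpow_pos_of_pos (hw k) _).le
  set uE : ℝ := ∑ k ∈ E, w k ^ p with huE
  have huEnonneg : 0 ≤ uE :=
    Finset.sum_nonneg (fun k _ => (Real.rpow_pos_of_pos (hw k) _).le)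
  have hcardE : (E.card : ℝ) ≤ uE ^ (1 / p) * (A₀ * 2 ^ s / P) := by
    calc (E.card : ℝ) ≤ uE ^ (1 / p) * (∑ k ∈ E, ((w k)⁻¹) ^ q) ^ (1 / q) := hhold
      _ ≤ uE ^ (1 / p) * Q :=
          mul_le_mul_of_nonneg_left hQE (Real.rpow_nonneg huEnonneg _)
      _ ≤ uE ^ (1 / p) * (A₀ * 2 ^ s / P) :=
          mul_le_mul_of_nonneg_left hQle (Real.rpow_nonneg huEnonneg _)
  -- raise to the p-th power
  have hA₀pos : (0:ℝ) < A₀ := lt_of_lt_of_le one_pos hA₀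
  have hRHSnonneg : 0 ≤ uE ^ (1 / p) * (A₀ * 2 ^ s / P) := by positivity
  have hpow := Real.rpow_le_rpow (Nat.cast_nonneg E.card) hcardE hp0.le
  have hexpand : (uE ^ (1 / p) * (A₀ * 2 ^ s / P)) ^ p =
      uE * (A₀ ^ p * ((2:ℝ) ^ s) ^ p / P ^ p) := by
    rw [Real.mul_rpow (Real.rpow_nonneg huEnonneg _) (by positivity),
      ← Real.rpow_mul huEnonneg, one_div_mul_cancel hp0.ne', Real.rpow_one,
      Real.div_rpow (by positivity) hPpos.le,
      Real.mul_rpow hA₀pos.le h2s.le]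
  have hPp : P ^ p = ∑ k ∈ Finset.Icc l n, w k ^ p := by
    rw [hPdef, ← Real.rpow_mul hPsum.le, one_div_mul_cancel hp0.ne', Real.rpow_one]
  rw [hexpand] at hpow
  -- multiply through by the block mass
  have hgoal : (∑ k ∈ Finset.Icc l n, w k ^ p) * (E.card : ℝ) ^ p ≤
      A₀ ^ p * uE * ((2:ℝ) ^ s) ^ p := by
    have h1 : (∑ k ∈ Finset.Icc l n, w k ^ p) * (E.card : ℝ) ^ p ≤
        (∑ k ∈ Finset.Icc l n, w k ^ p) * (uE * (A₀ ^ p * ((2:ℝ) ^ s) ^ p / P ^ p)) :=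
      mul_le_mul_of_nonneg_left hpow hPsum.le
    rw [hPp] at h1
    have h2 : (∑ k ∈ Finset.Icc l n, w k ^ p) *
        (uE * (A₀ ^ p * ((2:ℝ) ^ s) ^ p / (∑ k ∈ Finset.Icc l n, w k ^ p))) =
        A₀ ^ p * uE * ((2:ℝ) ^ s) ^ p := by
      field_simp
    rw [h2] at h1
    exact h1
  rw [hblk]
  exact hgoal

end RHaux

/-- **Reverse Hölder inequality** for discrete Muckenhoupt weights: if `1 < p < ∞` and
`w ∈ A_p(ℤ₊)`, then there exist `δ > 0` and `C > 0` depending only on `p` and `w` such that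
`((1/|R|) ∑_{k∈R} w_k^{p(1+δ)})^{1/(1+δ)} ≤ (C/|R|) ∑_{k∈R} w_k^p`
for every interval `R ⊂ ℤ₊` whose cardinality is a power `2^r`. -/
theorem reverse_holder_inequality (p : ℝ) (hp : 1 < p) (w : ℕ → ℝ) (hw : ∀ k, 0 < w k)
    (hA : MemApN p (p / (p - 1)) w) :
    ∃ δ : ℝ, 0 < δ ∧ ∃ C : ℝ, 0 < C ∧
      ∀ l n : ℕ, l ≤ n → (∃ r : ℕ, (Finset.Icc l n).card = 2 ^ r) →
        (((Finset.Icc l n).card : ℝ)⁻¹ *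
            ∑ k ∈ Finset.Icc l n, w k ^ (p * (1 + δ))) ^ (1 / (1 + δ)) ≤
          C * ((Finset.Icc l n).card : ℝ)⁻¹ * ∑ k ∈ Finset.Icc l n, w k ^ p := by
  classical
  obtain ⟨C₀, hC₀⟩ := hA
  set A₀ : ℝ := max C₀ 1 with hA₀def
  have hA₀ : 1 ≤ A₀ := le_max_right _ _
  have hAp : ∀ l n : ℕ, l ≤ n → apRatioN p (p / (p - 1)) w l n ≤ A₀ :=
    fun l n h => le_trans (hC₀ l n h) (le_max_left _ _)
  have hp0 : (0:ℝ) < p := lt_trans one_pos hp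
  set u : ℕ → ℝ := fun k => w k ^ p with hudef
  have hu : ∀ k, 0 < u k := fun k => Real.rpow_pos_of_pos (hw k) p
  set A : ℝ := A₀ ^ p with hAdef
  have hA1 : 1 ≤ A := by
    calc (1:ℝ) = 1 ^ p := (Real.one_rpow p).symm
      _ ≤ A₀ ^ p := Real.rpow_le_rpow (by norm_num) hA₀ hp0.le
  have hAinf : ∀ (l s : ℕ) (E : Finset ℕ), E ⊆ RHaux.blk l s →
      (∑ k ∈ RHaux.blk l s, u k) * (E.card : ℝ) ^ p ≤
        A * (∑ k ∈ E, u k) * (((2:ℝ) ^ s) ^ p) := by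
    intro l s E hE
    exact RHaux.ainf_of_ap hp rfl hw hA₀ hAp l s E hE
  set θ : ℝ := RHaux.theta p A with hθdef
  have hθpos : 0 < θ := RHaux.theta_pos hp0 hA1
  have hθlt1 : θ < 1 := RHaux.theta_lt_one hA1
  set δ : ℝ := -Real.log θ / (2 * Real.log 4) with hδdef
  have hlog4 : 0 < Real.log 4 := Real.log_pos (by norm_num)
  have hδpos : 0 < δ := div_pos (neg_pos.mpr (Real.log_neg hθpos hθlt1)) (by positivity)
  set τ : ℝ := 4 ^ δ * θ with hτdef
  have hτ0 : 0 ≤ τ := mul_nonneg (Real.rpow_nonneg (by norm_num) _) hθpos.le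
  have h4sq : ((4:ℝ) ^ δ) ^ 2 = (4:ℝ) ^ (2 * δ) := by
    rw [← Real.rpow_natCast ((4:ℝ) ^ δ) 2, ← Real.rpow_mul (by norm_num : (0:ℝ) ≤ 4),
      mul_comm]
    norm_num
  have hexp : 2 * δ * Real.log 4 = -Real.log θ := by
    rw [hδdef]
    field_simp
  have h4 : (4:ℝ) ^ (2 * δ) = θ⁻¹ := by
    rw [Real.rpow_def_of_pos (by norm_num : (0:ℝ) < 4), mul_comm, hexp, Real.exp_neg,
      Real.exp_log hθpos]
  have hτsq : τ ^ 2 = θ := by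
    rw [hτdef, mul_pow, h4sq, h4, sq, ← mul_assoc, inv_mul_cancel₀ hθpos.ne', one_mul]
  have hτ1 : τ < 1 := by nlinarith
  refine ⟨δ, hδpos, max ((1 - τ)⁻¹ * 4 ^ δ) 1,
    lt_of_lt_of_le one_pos (le_max_right _ _), ?_⟩
  rintro l n hln ⟨r, hr⟩
  rw [Nat.card_Icc] at hr
  have h2r : 1 ≤ 2 ^ r := Nat.one_le_two_pow
  have hn : n = l + 2 ^ r - 1 := by omega
  subst hn
  have hblk : Finset.Icc l (l + 2 ^ r - 1) = RHaux.blk l r := rfl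
  have hcardr : ((Finset.Icc l (l + 2 ^ r - 1)).card : ℝ) = 2 ^ r :=
    RHaux.blk_card_real l r
  rw [hcardr, hblk]
  have hsum1 : ∑ k ∈ RHaux.blk l r, w k ^ (p * (1 + δ)) =
      ∑ k ∈ RHaux.blk l r, u k ^ (1 + δ) :=
    Finset.sum_congr rfl (fun k _ => Real.rpow_mul (hw k).le p (1 + δ))
  rw [hsum1, mul_assoc]
  exact RHaux.core_final hu hp hA1 hAinf hδpos hτ0 hτ1 hτdef.ge (le_refl _) l r
end RHsection
end

section
/- Let w : ℤ₊ → (0,∞) be a weight. Then the set Γ := {(p, δ) ∈ (1,∞) × ℝ : the weight k ↦ w_k^{δ/p} belongs to the Muckenhoupt class A_p(ℤ₊)} is a convex subset of ℝ². -/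
open Finset Real

section LogConvexity

variable {ι : Type*} {s : Finset ι} {w : ι → ℝ}

theorem sum_rpow_nonneg (hw : ∀ i ∈ s, 0 ≤ w i) (γ : ℝ) : 0 ≤ ∑ i ∈ s, w i ^ γ :=
  sum_nonneg fun i hi => rpow_nonneg (hw i hi) γ

theorem sum_rpow_convexComb_le (hw : ∀ i ∈ s, 0 < w i) (α β : ℝ) {θ : ℝ} (hθ₀ : 0 ≤ θ)
    (hθ₁ : θ ≤ 1) :
    ∑ i ∈ s, w i ^ (θ * α + (1 - θ) * β) ≤
      (∑ i ∈ s, w i ^ α) ^ θ * (∑ i ∈ s, w i ^ β) ^ (1 - θ) := by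
  rcases hθ₀.eq_or_lt with rfl | hθ₀
  · simp
  rcases hθ₁.eq_or_lt with rfl | hθ₁
  · simp
  have hpq : (1 / θ).HolderConjugate (1 / (1 - θ)) := by
    rw [Real.holderConjugate_iff]
    exact ⟨by rw [lt_div_iff₀ hθ₀]; linarith, by simp⟩
  calc ∑ i ∈ s, w i ^ (θ * α + (1 - θ) * β)
      = ∑ i ∈ s, w i ^ (θ * α) * w i ^ ((1 - θ) * β) :=
        sum_congr rfl fun i hi => rpow_add (hw i hi) _ _
    _ ≤ (∑ i ∈ s, (w i ^ (θ * α)) ^ (1 / θ)) ^ (1 / (1 / θ)) *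
        (∑ i ∈ s, (w i ^ ((1 - θ) * β)) ^ (1 / (1 - θ))) ^ (1 / (1 / (1 - θ))) :=
        inner_le_Lp_mul_Lq_of_nonneg s hpq (fun i hi => (rpow_pos_of_pos (hw i hi) _).le)
          (fun i hi => (rpow_pos_of_pos (hw i hi) _).le)
    _ = (∑ i ∈ s, w i ^ α) ^ θ * (∑ i ∈ s, w i ^ β) ^ (1 - θ) := by
        rw [one_div_one_div, one_div_one_div]
        congr 2 <;> refine sum_congr rfl fun i hi => ?_ <;>
          rw [← rpow_mul (hw i hi).le] <;> congr 1 <;> field_simp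

theorem sum_rpow_perspective_le (hw : ∀ i ∈ s, 0 < w i) (α β : ℝ) {u v : ℝ} (hu : 0 ≤ u)
    (hv : 0 ≤ v) (huv : 0 < u + v) :
    (∑ i ∈ s, w i ^ ((u * α + v * β) / (u + v))) ^ (u + v) ≤
      (∑ i ∈ s, w i ^ α) ^ u * (∑ i ∈ s, w i ^ β) ^ v := by
  have hS := sum_rpow_nonneg fun i hi => (hw i hi).le
  have hθ : 1 - u / (u + v) = v / (u + v) := by field_simp; ring
  have hcomb : (u * α + v * β) / (u + v) = u / (u + v) * α + (1 - u / (u + v)) * β := by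
    rw [hθ]; field_simp
  calc (∑ i ∈ s, w i ^ ((u * α + v * β) / (u + v))) ^ (u + v)
      ≤ ((∑ i ∈ s, w i ^ α) ^ (u / (u + v)) * (∑ i ∈ s, w i ^ β) ^ (v / (u + v))) ^ (u + v) := by
        rw [hcomb, ← hθ]
        exact rpow_le_rpow (hS _) (sum_rpow_convexComb_le hw α β (by positivity)
          (div_le_one_of_le₀ (by linarith) huv.le)) huv.le
    _ = (∑ i ∈ s, w i ^ α) ^ u * (∑ i ∈ s, w i ^ β) ^ v := by
        rw [mul_rpow (rpow_nonneg (hS _) _) (rpow_nonneg (hS _) _), ← rpow_mul (hS _),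
          ← rpow_mul (hS _), div_mul_cancel₀ _ huv.ne', div_mul_cancel₀ _ huv.ne']

end LogConvexity

/-- `|J| ^ p` times the `p`-th power of the `A_p` ratio of `w ^ (δ / p)` over `J`. -/
noncomputable def muckenhouptProduct {ι : Type*} (J : Finset ι) (w : ι → ℝ) (p δ : ℝ) : ℝ :=
  (∑ i ∈ J, w i ^ δ) * (∑ i ∈ J, w i ^ (-δ / (p - 1))) ^ (p - 1)

theorem one_lt_convexComb {p₀ p₁ a b : ℝ} (hp₀ : 1 < p₀) (hp₁ : 1 < p₁) (ha : 0 ≤ a)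
    (hb : 0 ≤ b) (hab : a + b = 1) : 1 < a * p₀ + b * p₁ := by
  simpa using convex_Ioi (1 : ℝ) hp₀ hp₁ ha hb hab

section MuckenhouptProduct

variable {ι : Type*} {J : Finset ι} {w : ι → ℝ}

theorem muckenhouptProduct_nonneg (hw : ∀ i ∈ J, 0 < w i) (p δ : ℝ) :
    0 ≤ muckenhouptProduct J w p δ := by
  have hS := sum_rpow_nonneg fun i hi => (hw i hi).le
  exact mul_nonneg (hS _) (rpow_nonneg (hS _) _)

theorem muckenhouptProduct_convexComb_le (hw : ∀ i ∈ J, 0 < w i) {p₀ p₁ a b : ℝ}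
    (hp₀ : 1 < p₀) (hp₁ : 1 < p₁) (ha : 0 ≤ a) (hb : 0 ≤ b) (hab : a + b = 1) (δ₀ δ₁ : ℝ) :
    muckenhouptProduct J w (a * p₀ + b * p₁) (a * δ₀ + b * δ₁) ≤
      muckenhouptProduct J w p₀ δ₀ ^ a * muckenhouptProduct J w p₁ δ₁ ^ b := by
  have hS := sum_rpow_nonneg fun i hi => (hw i hi).le
  have hsub : a * p₀ + b * p₁ - 1 = a * (p₀ - 1) + b * (p₁ - 1) := by linear_combination hab
  have hpos : 0 < a * (p₀ - 1) + b * (p₁ - 1) := by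
    linarith [one_lt_convexComb hp₀ hp₁ ha hb hab]
  have first : ∑ i ∈ J, w i ^ (a * δ₀ + b * δ₁) ≤
      (∑ i ∈ J, w i ^ δ₀) ^ a * (∑ i ∈ J, w i ^ δ₁) ^ b := by
    simpa [hab] using sum_rpow_perspective_le hw δ₀ δ₁ ha hb (by linarith)
  have second : (∑ i ∈ J, w i ^ (-(a * δ₀ + b * δ₁) / (a * p₀ + b * p₁ - 1))) ^
        (a * p₀ + b * p₁ - 1) ≤
      (∑ i ∈ J, w i ^ (-δ₀ / (p₀ - 1))) ^ (a * (p₀ - 1)) *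
        (∑ i ∈ J, w i ^ (-δ₁ / (p₁ - 1))) ^ (b * (p₁ - 1)) := by
    convert sum_rpow_perspective_le hw (-δ₀ / (p₀ - 1)) (-δ₁ / (p₁ - 1))
      (mul_nonneg ha (by linarith)) (mul_nonneg hb (by linarith)) hpos using 4
    have : p₀ - 1 ≠ 0 := by linarith
    have : p₁ - 1 ≠ 0 := by linarith
    rw [hsub]
    field_simp
    ring
  calc muckenhouptProduct J w (a * p₀ + b * p₁) (a * δ₀ + b * δ₁)
      ≤ ((∑ i ∈ J, w i ^ δ₀) ^ a * (∑ i ∈ J, w i ^ δ₁) ^ b) *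
          ((∑ i ∈ J, w i ^ (-δ₀ / (p₀ - 1))) ^ (a * (p₀ - 1)) *
            (∑ i ∈ J, w i ^ (-δ₁ / (p₁ - 1))) ^ (b * (p₁ - 1))) :=
        mul_le_mul first second (rpow_nonneg (hS _) _)
          (mul_nonneg (rpow_nonneg (hS _) _) (rpow_nonneg (hS _) _))
    _ = muckenhouptProduct J w p₀ δ₀ ^ a * muckenhouptProduct J w p₁ δ₁ ^ b := by
        simp only [muckenhouptProduct]
        rw [mul_rpow (hS _) (rpow_nonneg (hS _) _), mul_rpow (hS _) (rpow_nonneg (hS _) _),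
          ← rpow_mul (hS _), ← rpow_mul (hS _), mul_comm (p₀ - 1), mul_comm (p₁ - 1)]
        ring

end MuckenhouptProduct

theorem apRatioN_rpow_eq {w : ℕ → ℝ} (hw : ∀ k, 0 < w k) {p : ℝ} (hp : 1 < p) (δ : ℝ)
    (l n : ℕ) :
    apRatioN p (p / (p - 1)) (fun k => w k ^ (δ / p)) l n ^ p =
      ((Icc l n).card : ℝ)⁻¹ ^ p * muckenhouptProduct (Icc l n) w p δ := by
  have hp₀ : p ≠ 0 := by positivity
  have hp₁ : p - 1 ≠ 0 := by linarith
  have hS := sum_rpow_nonneg (s := Icc l n) fun k _ => (hw k).le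
  have hpow : ∀ k γ, (w k ^ (δ / p)) ^ γ = w k ^ (δ / p * γ) := fun k γ =>
    (rpow_mul (hw k).le _ _).symm
  simp only [apRatioN, muckenhouptProduct, hpow]
  rw [mul_rpow (mul_nonneg (by positivity) (rpow_nonneg (hS _) _)) (rpow_nonneg (hS _) _),
    mul_rpow (by positivity) (rpow_nonneg (hS _) _), ← rpow_mul (hS _), ← rpow_mul (hS _)]
  field_simp
  rw [rpow_one]
  ring

theorem apRatioN_nonneg (p q : ℝ) {w : ℕ → ℝ} (hw : ∀ k, 0 ≤ w k) (l n : ℕ) :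
    0 ≤ apRatioN p q w l n := by
  have hS := sum_rpow_nonneg (s := Icc l n) fun k _ => hw k
  exact mul_nonneg (mul_nonneg (by positivity) (rpow_nonneg (hS p) _)) (rpow_nonneg (hS _) _)

section Convexity

variable {w : ℕ → ℝ} {p₀ p₁ δ₀ δ₁ a b : ℝ}

theorem apRatioN_rpow_convexComb_le (hw : ∀ k, 0 < w k) (hp₀ : 1 < p₀) (hp₁ : 1 < p₁)
    (ha : 0 ≤ a) (hb : 0 ≤ b) (hab : a + b = 1) (l n : ℕ) :
    apRatioN (a * p₀ + b * p₁) ((a * p₀ + b * p₁) / (a * p₀ + b * p₁ - 1))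
        (fun k => w k ^ ((a * δ₀ + b * δ₁) / (a * p₀ + b * p₁))) l n ^ (a * p₀ + b * p₁) ≤
      (apRatioN p₀ (p₀ / (p₀ - 1)) (fun k => w k ^ (δ₀ / p₀)) l n ^ p₀) ^ a *
        (apRatioN p₁ (p₁ / (p₁ - 1)) (fun k => w k ^ (δ₁ / p₁)) l n ^ p₁) ^ b := by
  have hp := one_lt_convexComb hp₀ hp₁ ha hb hab
  have hJ : ∀ i ∈ Icc l n, 0 < w i := fun i _ => hw i
  rw [apRatioN_rpow_eq hw hp, apRatioN_rpow_eq hw hp₀, apRatioN_rpow_eq hw hp₁]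
  set N : ℝ := ((Icc l n).card : ℝ)⁻¹
  have hN : 0 ≤ N := by positivity
  have hNpow : N ^ (a * p₀ + b * p₁) = (N ^ p₀) ^ a * (N ^ p₁) ^ b := by
    rw [rpow_add' hN (by linarith), ← rpow_mul hN, ← rpow_mul hN, mul_comm p₀, mul_comm p₁]
  calc N ^ (a * p₀ + b * p₁) *
        muckenhouptProduct (Icc l n) w (a * p₀ + b * p₁) (a * δ₀ + b * δ₁)
      ≤ (N ^ p₀) ^ a * (N ^ p₁) ^ b *
          (muckenhouptProduct (Icc l n) w p₀ δ₀ ^ a * muckenhouptProduct (Icc l n) w p₁ δ₁ ^ b) := by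
        rw [hNpow]
        exact mul_le_mul_of_nonneg_left (muckenhouptProduct_convexComb_le hJ hp₀ hp₁ ha hb hab _ _)
          (by positivity)
    _ = (N ^ p₀ * muckenhouptProduct (Icc l n) w p₀ δ₀) ^ a *
          (N ^ p₁ * muckenhouptProduct (Icc l n) w p₁ δ₁) ^ b := by
        rw [mul_rpow (by positivity) (muckenhouptProduct_nonneg hJ _ _),
          mul_rpow (by positivity) (muckenhouptProduct_nonneg hJ _ _)]
        ring

theorem memApN_convexComb (hw : ∀ k, 0 < w k) (hp₀ : 1 < p₀) (hp₁ : 1 < p₁)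
    (ha : 0 ≤ a) (hb : 0 ≤ b) (hab : a + b = 1)
    (h₀ : MemApN p₀ (p₀ / (p₀ - 1)) (fun k => w k ^ (δ₀ / p₀)))
    (h₁ : MemApN p₁ (p₁ / (p₁ - 1)) (fun k => w k ^ (δ₁ / p₁))) :
    MemApN (a * p₀ + b * p₁) ((a * p₀ + b * p₁) / (a * p₀ + b * p₁ - 1))
      (fun k => w k ^ ((a * δ₀ + b * δ₁) / (a * p₀ + b * p₁))) := by
  obtain ⟨C₀, hC₀⟩ := h₀
  obtain ⟨C₁, hC₁⟩ := h₁
  have hp := one_lt_convexComb hp₀ hp₁ ha hb hab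
  have hR : ∀ (p q δ : ℝ) (l n : ℕ), 0 ≤ apRatioN p q (fun k => w k ^ δ) l n := fun p q δ =>
    apRatioN_nonneg p q fun k => (rpow_pos_of_pos (hw k) δ).le
  refine ⟨((C₀ ^ p₀) ^ a * (C₁ ^ p₁) ^ b) ^ (a * p₀ + b * p₁)⁻¹, fun l n hln => ?_⟩
  rw [← rpow_rpow_inv (hR _ _ _ l n) (by linarith : a * p₀ + b * p₁ ≠ 0)]
  refine rpow_le_rpow (rpow_nonneg (hR _ _ _ l n) _) ?_ (by positivity)
  refine (apRatioN_rpow_convexComb_le hw hp₀ hp₁ ha hb hab l n).trans ?_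
  have hle : ∀ {R C p c : ℝ}, 0 ≤ R → R ≤ C → 0 < p → 0 ≤ c → (R ^ p) ^ c ≤ (C ^ p) ^ c :=
    fun hR₀ hRC hpos hc => rpow_le_rpow (rpow_nonneg hR₀ _) (rpow_le_rpow hR₀ hRC hpos.le) hc
  exact mul_le_mul (hle (hR _ _ _ l n) (hC₀ l n hln) (by linarith) ha)
    (hle (hR _ _ _ l n) (hC₁ l n hln) (by linarith) hb)
    (rpow_nonneg (rpow_nonneg (hR _ _ _ l n) _) _)
    (rpow_nonneg (rpow_nonneg ((hR _ _ _ l n).trans (hC₀ l n hln)) _) _)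

end Convexity

/-- **"Convexity" property of discrete Muckenhoupt weights.** For a weight
`w : ℤ₊ → (0,∞)`, the set `Γ = {(p,δ) ∈ (1,∞) × ℝ : w^{δ/p} ∈ A_p(ℤ₊)}` is convex. -/
theorem convex_muckenhoupt_parameter_set (w : ℕ → ℝ) (hw : ∀ k, 0 < w k) :
    Convex ℝ {pd : ℝ × ℝ | 1 < pd.1 ∧
      MemApN pd.1 (pd.1 / (pd.1 - 1)) (fun k => w k ^ (pd.2 / pd.1))} := by
  rintro ⟨p₀, δ₀⟩ ⟨hp₀, h₀⟩ ⟨p₁, δ₁⟩ ⟨hp₁, h₁⟩ a b ha hb hab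
  exact ⟨one_lt_convexComb hp₀ hp₁ ha hb hab, memApN_convexComb hw hp₀ hp₁ ha hb hab h₀ h₁⟩
end

section
/- Let 1 < p₀ < ∞, 1/p₀ + 1/q₀ = 1, let w : ℤ₊ → (0,∞) be a weight in the Muckenhoupt class A_{p₀}(ℤ₊), and let λ > 0 and C, D > 0 be constants such that for every interval R ⊂ ℤ₊ of cardinality 2^r with r ∈ ℕ one has ((1/|R|) ∑_{k∈R} w_k^{p₀(1+λ)})^{1/(1+λ)} ≤ (C/|R|) ∑_{k∈R} w_k^{p₀} and ((1/|R|) ∑_{k∈R} w_k^{−q₀(1+λ)})^{1/(1+λ)} ≤ (D/|R|) ∑_{k∈R} w_k^{−q₀}. Then the weight w^{1+λ} belongs to A_{p₀}(ℤ₊) and [w^{1+λ}]_{A_{p₀}(ℤ₊)} ≤ 2 (C^{1/p₀} D^{1/q₀})^{1+λ} [w]_{A_{p₀}(ℤ₊)}^{1+λ}. -/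
/-- The Muckenhoupt characteristic `[w]_{A_p(ℤ₊)}`: the supremum of the Muckenhoupt
ratios over all intervals of `ℤ₊`. -/
noncomputable def apNormN (p q : ℝ) (w : ℕ → ℝ) : ℝ :=
  sSup {C : ℝ | ∃ l n : ℕ, l ≤ n ∧ C = apRatioN p q w l n}

/-- If `w ∈ A_{p₀}(ℤ₊)` and the reverse Hölder inequalities with exponent `1 + λ` and
constants `C`, `D` hold for `w^{p₀}` and `w^{-q₀}` over all intervals of cardinality `2^r`,
then `w^{1+λ} ∈ A_{p₀}(ℤ₊)` with
`[w^{1+λ}]_{A_{p₀}} ≤ 2 (C^{1/p₀} D^{1/q₀})^{1+λ} [w]_{A_{p₀}}^{1+λ}`. -/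
theorem muckenhoupt_power_bound (p₀ q₀ : ℝ) (hp : 1 < p₀) (hpq : 1 / p₀ + 1 / q₀ = 1)
    (w : ℕ → ℝ) (hw : ∀ k, 0 < w k) (hA : MemApN p₀ q₀ w)
    (lam C D : ℝ) (hlam : 0 < lam) (hC : 0 < C) (hD : 0 < D)
    (h1 : ∀ l n : ℕ, l ≤ n → (∃ r : ℕ, (Finset.Icc l n).card = 2 ^ r) →
      (((Finset.Icc l n).card : ℝ)⁻¹ *
          ∑ k ∈ Finset.Icc l n, w k ^ (p₀ * (1 + lam))) ^ (1 / (1 + lam)) ≤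
        C * ((Finset.Icc l n).card : ℝ)⁻¹ * ∑ k ∈ Finset.Icc l n, w k ^ p₀)
    (h2 : ∀ l n : ℕ, l ≤ n → (∃ r : ℕ, (Finset.Icc l n).card = 2 ^ r) →
      (((Finset.Icc l n).card : ℝ)⁻¹ *
          ∑ k ∈ Finset.Icc l n, w k ^ (-(q₀ * (1 + lam)))) ^ (1 / (1 + lam)) ≤
        D * ((Finset.Icc l n).card : ℝ)⁻¹ * ∑ k ∈ Finset.Icc l n, w k ^ (-q₀)) :
    MemApN p₀ q₀ (fun k => w k ^ (1 + lam)) ∧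
      apNormN p₀ q₀ (fun k => w k ^ (1 + lam)) ≤
        2 * (C ^ (1 / p₀) * D ^ (1 / q₀)) ^ (1 + lam) * apNormN p₀ q₀ w ^ (1 + lam) := by
  have hp0 : (0:ℝ) < p₀ := lt_trans one_pos hp
  have hq0 : (0:ℝ) < q₀ := by
    have h1p : 1 / p₀ < 1 := by rw [div_lt_one hp0]; exact hp
    have hb : 0 < 1 / q₀ := by linarith
    exact one_div_pos.mp hb
  have hl1 : (0:ℝ) < 1 + lam := by linarith
  have hl0 : (1:ℝ) + lam ≠ 0 := ne_of_gt hl1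
  obtain ⟨C₀, hC₀⟩ := hA
  have hratio_nonneg : ∀ (u : ℕ → ℝ), (∀ k, 0 < u k) → ∀ l n : ℕ,
      0 ≤ apRatioN p₀ q₀ u l n := by
    intro u hu l n
    unfold apRatioN
    have hs1 : (0:ℝ) ≤ ∑ k ∈ Finset.Icc l n, u k ^ p₀ :=
      Finset.sum_nonneg fun k _ => (Real.rpow_pos_of_pos (hu k) _).le
    have hs2 : (0:ℝ) ≤ ∑ k ∈ Finset.Icc l n, u k ^ (-q₀) :=
      Finset.sum_nonneg fun k _ => (Real.rpow_pos_of_pos (hu k) _).le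
    exact mul_nonneg (mul_nonneg (by positivity) (Real.rpow_nonneg hs1 _))
      (Real.rpow_nonneg hs2 _)
  have hbdd : BddAbove {Cx : ℝ | ∃ l n : ℕ, l ≤ n ∧ Cx = apRatioN p₀ q₀ w l n} := by
    refine ⟨C₀, ?_⟩
    rintro x ⟨l, n, hln, rfl⟩
    exact hC₀ l n hln
  have hmem : ∀ l n : ℕ, l ≤ n → apRatioN p₀ q₀ w l n ≤ apNormN p₀ q₀ w :=
    fun l n h => le_csSup hbdd ⟨l, n, h, rfl⟩
  have hNw0 : 0 ≤ apNormN p₀ q₀ w := (hratio_nonneg w hw 0 0).trans (hmem 0 0 le_rfl)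
  have hcd : (0:ℝ) < C ^ (1 / p₀) * D ^ (1 / q₀) := by positivity
  have key : ∀ l n : ℕ, l ≤ n → apRatioN p₀ q₀ (fun k => w k ^ (1 + lam)) l n ≤
      2 * (C ^ (1 / p₀) * D ^ (1 / q₀)) ^ (1 + lam) * apNormN p₀ q₀ w ^ (1 + lam) := by
    intro l n hln
    have hcard : (Finset.Icc l n).card = n + 1 - l := Nat.card_Icc l n
    set r := Nat.clog 2 (n + 1 - l) with hr
    have h2ra : n + 1 - l ≤ 2 ^ r := Nat.le_pow_clog one_lt_two _
    have h2rb : 2 ^ r ≤ 2 * (n + 1 - l) := by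
      rcases Nat.lt_or_ge (n + 1 - l) 2 with h | h
      · have hm1 : n + 1 - l = 1 := by omega
        rw [hr, hm1, Nat.clog_one_right]
        norm_num
      · have hlt : 2 ^ (r - 1) < n + 1 - l := by
          have h' := Nat.pow_pred_clog_lt_self one_lt_two (show 1 < n + 1 - l by omega)
          rw [Nat.pred_eq_sub_one, ← hr] at h'
          exact h'
        have hr1 : 0 < r := Nat.clog_pos one_lt_two (by omega)
        have hsplit : 2 ^ r = 2 * 2 ^ (r - 1) := by
          conv_lhs => rw [show r = (r - 1) + 1 by omega]
          ring
        omega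
    have h2rpos : 1 ≤ 2 ^ r := Nat.one_le_two_pow
    set n' := l + 2 ^ r - 1 with hn'
    have hcard' : (Finset.Icc l n').card = 2 ^ r := by rw [Nat.card_Icc]; omega
    have hnn' : n ≤ n' := by omega
    have hln' : l ≤ n' := hln.trans hnn'
    have hsub : Finset.Icc l n ⊆ Finset.Icc l n' := Finset.Icc_subset_Icc_right hnn'
    have hpos : ∀ s : ℝ, 0 < ∑ k ∈ Finset.Icc l n', w k ^ s := fun s =>
      Finset.sum_pos (fun k _ => Real.rpow_pos_of_pos (hw k) s)
        (Finset.nonempty_Icc.mpr hln')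
    have hm : (0:ℝ) < ((Finset.Icc l n).card : ℝ) := by
      have : 0 < (Finset.Icc l n).card := by rw [hcard]; omega
      exact_mod_cast this
    set M : ℝ := ((Finset.Icc l n').card : ℝ) with hMd
    have hMpos : 0 < M := by
      have : 0 < (Finset.Icc l n').card := by rw [hcard']; positivity
      rw [hMd]; exact_mod_cast this
    set T1 := ∑ k ∈ Finset.Icc l n', w k ^ p₀ with hT1d
    set T2 := ∑ k ∈ Finset.Icc l n', w k ^ (-q₀) with hT2d
    set S1 := ∑ k ∈ Finset.Icc l n', w k ^ (p₀ * (1 + lam)) with hS1d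
    set S2 := ∑ k ∈ Finset.Icc l n', w k ^ (-(q₀ * (1 + lam))) with hS2d
    have hT1p : 0 < T1 := hpos _
    have hT2p : 0 < T2 := hpos _
    have hS1p : 0 < S1 := hpos _
    have hS2p : 0 < S2 := hpos _
    have ineq1 := h1 l n' hln' ⟨r, hcard'⟩
    have ineq2 := h2 l n' hln' ⟨r, hcard'⟩
    set X := C * M⁻¹ * T1 with hXd
    set Y := D * M⁻¹ * T2 with hYd
    have hXp : 0 < X := mul_pos (mul_pos hC (inv_pos.mpr hMpos)) hT1p
    have hYp : 0 < Y := mul_pos (mul_pos hD (inv_pos.mpr hMpos)) hT2p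
    have hS1le : S1 ≤ M * X ^ (1 + lam) := by
      have h0 : (0:ℝ) ≤ M⁻¹ * S1 := mul_nonneg (inv_nonneg.mpr hMpos.le) hS1p.le
      have hrle := Real.rpow_le_rpow (Real.rpow_nonneg h0 _) ineq1 hl1.le
      rw [← Real.rpow_mul h0, one_div_mul_cancel hl0, Real.rpow_one] at hrle
      calc S1 = M * (M⁻¹ * S1) := by field_simp
        _ ≤ M * X ^ (1 + lam) := mul_le_mul_of_nonneg_left hrle hMpos.le
    have hS2le : S2 ≤ M * Y ^ (1 + lam) := by
      have h0 : (0:ℝ) ≤ M⁻¹ * S2 := mul_nonneg (inv_nonneg.mpr hMpos.le) hS2p.le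
      have hrle := Real.rpow_le_rpow (Real.rpow_nonneg h0 _) ineq2 hl1.le
      rw [← Real.rpow_mul h0, one_div_mul_cancel hl0, Real.rpow_one] at hrle
      calc S2 = M * (M⁻¹ * S2) := by field_simp
        _ ≤ M * Y ^ (1 + lam) := mul_le_mul_of_nonneg_left hrle hMpos.le
    have eA1 : ∑ k ∈ Finset.Icc l n, (w k ^ (1 + lam)) ^ p₀
        = ∑ k ∈ Finset.Icc l n, w k ^ (p₀ * (1 + lam)) :=
      Finset.sum_congr rfl fun k _ => by rw [← Real.rpow_mul (hw k).le, mul_comm]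
    have eA2 : ∑ k ∈ Finset.Icc l n, (w k ^ (1 + lam)) ^ (-q₀)
        = ∑ k ∈ Finset.Icc l n, w k ^ (-(q₀ * (1 + lam))) :=
      Finset.sum_congr rfl fun k _ => by
        rw [← Real.rpow_mul (hw k).le]; congr 1; ring
    have hA1le : ∑ k ∈ Finset.Icc l n, w k ^ (p₀ * (1 + lam)) ≤ S1 := by
      rw [hS1d]
      exact Finset.sum_le_sum_of_subset_of_nonneg hsub
        fun k _ _ => (Real.rpow_pos_of_pos (hw k) _).le
    have hA2le : ∑ k ∈ Finset.Icc l n, w k ^ (-(q₀ * (1 + lam))) ≤ S2 := by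
      rw [hS2d]
      exact Finset.sum_le_sum_of_subset_of_nonneg hsub
        fun k _ _ => (Real.rpow_pos_of_pos (hw k) _).le
    have hA1nn : (0:ℝ) ≤ ∑ k ∈ Finset.Icc l n, w k ^ (p₀ * (1 + lam)) :=
      Finset.sum_nonneg fun k _ => (Real.rpow_pos_of_pos (hw k) _).le
    have hA2nn : (0:ℝ) ≤ ∑ k ∈ Finset.Icc l n, w k ^ (-(q₀ * (1 + lam))) :=
      Finset.sum_nonneg fun k _ => (Real.rpow_pos_of_pos (hw k) _).le
    -- algebraic identities
    have e3 : ∀ Z s : ℝ, 0 < Z → (M * Z ^ (1 + lam)) ^ s = M ^ s * (Z ^ s) ^ (1 + lam) := by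
      intro Z s hZ
      rw [Real.mul_rpow hMpos.le (Real.rpow_nonneg hZ.le _), ← Real.rpow_mul hZ.le,
        mul_comm (1 + lam) s, Real.rpow_mul hZ.le]
    have e4 : M ^ (1 / p₀) * M ^ (1 / q₀) = M := by
      rw [← Real.rpow_add hMpos, hpq, Real.rpow_one]
    have hR' : apRatioN p₀ q₀ w l n' = M⁻¹ * T1 ^ (1 / p₀) * T2 ^ (1 / q₀) := by
      rw [apRatioN, ← hMd, ← hT1d, ← hT2d]
    have e5 : X ^ (1 / p₀) * Y ^ (1 / q₀)
        = (C ^ (1 / p₀) * D ^ (1 / q₀)) * apRatioN p₀ q₀ w l n' := by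
      rw [hR', hXd, hYd,
        Real.mul_rpow (mul_nonneg hC.le (inv_nonneg.mpr hMpos.le)) hT1p.le,
        Real.mul_rpow hC.le (inv_nonneg.mpr hMpos.le),
        Real.mul_rpow (mul_nonneg hD.le (inv_nonneg.mpr hMpos.le)) hT2p.le,
        Real.mul_rpow hD.le (inv_nonneg.mpr hMpos.le)]
      have e6 : M⁻¹ ^ (1 / p₀) * M⁻¹ ^ (1 / q₀) = M⁻¹ := by
        rw [← Real.rpow_add (inv_pos.mpr hMpos), hpq, Real.rpow_one]
      calc C ^ (1/p₀) * M⁻¹ ^ (1/p₀) * T1 ^ (1/p₀) * (D ^ (1/q₀) * M⁻¹ ^ (1/q₀) * T2 ^ (1/q₀))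
          = (C ^ (1/p₀) * D ^ (1/q₀)) * ((M⁻¹ ^ (1/p₀) * M⁻¹ ^ (1/q₀)) * T1 ^ (1/p₀) * T2 ^ (1/q₀)) := by ring
        _ = C ^ (1/p₀) * D ^ (1/q₀) * (M⁻¹ * T1 ^ (1/p₀) * T2 ^ (1/q₀)) := by rw [e6]
    have hMm : M ≤ 2 * ((Finset.Icc l n).card : ℝ) := by
      have hnat : (Finset.Icc l n').card ≤ 2 * (Finset.Icc l n).card := by
        rw [hcard', hcard]; exact h2rb
      rw [hMd]; exact_mod_cast hnat
    have hRle : apRatioN p₀ q₀ w l n' ≤ apNormN p₀ q₀ w := hmem l n' hln'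
    have hRnn : 0 ≤ apRatioN p₀ q₀ w l n' := hratio_nonneg w hw l n'
    calc apRatioN p₀ q₀ (fun k => w k ^ (1 + lam)) l n
        = ((Finset.Icc l n).card : ℝ)⁻¹ *
            (∑ k ∈ Finset.Icc l n, w k ^ (p₀ * (1 + lam))) ^ (1 / p₀) *
            (∑ k ∈ Finset.Icc l n, w k ^ (-(q₀ * (1 + lam)))) ^ (1 / q₀) := by
          rw [apRatioN]
          rw [eA1, eA2]
      _ ≤ ((Finset.Icc l n).card : ℝ)⁻¹ * S1 ^ (1 / p₀) * S2 ^ (1 / q₀) := by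
          apply mul_le_mul
          · exact mul_le_mul_of_nonneg_left
              (Real.rpow_le_rpow hA1nn hA1le (one_div_pos.mpr hp0).le)
              (inv_nonneg.mpr hm.le)
          · exact Real.rpow_le_rpow hA2nn hA2le (one_div_pos.mpr hq0).le
          · exact Real.rpow_nonneg hA2nn _
          · exact mul_nonneg (inv_nonneg.mpr hm.le) (Real.rpow_nonneg hS1p.le _)
      _ ≤ ((Finset.Icc l n).card : ℝ)⁻¹ * (M * X ^ (1 + lam)) ^ (1 / p₀) *
            (M * Y ^ (1 + lam)) ^ (1 / q₀) := by
          have hMX : (0:ℝ) ≤ M * X ^ (1 + lam) :=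
            mul_nonneg hMpos.le (Real.rpow_nonneg hXp.le _)
          apply mul_le_mul
          · exact mul_le_mul_of_nonneg_left
              (Real.rpow_le_rpow hS1p.le hS1le (one_div_pos.mpr hp0).le)
              (inv_nonneg.mpr hm.le)
          · exact Real.rpow_le_rpow hS2p.le hS2le (one_div_pos.mpr hq0).le
          · exact Real.rpow_nonneg hS2p.le _
          · exact mul_nonneg (inv_nonneg.mpr hm.le) (Real.rpow_nonneg hMX _)
      _ = (M / ((Finset.Icc l n).card : ℝ)) *
            ((C ^ (1 / p₀) * D ^ (1 / q₀)) * apRatioN p₀ q₀ w l n') ^ (1 + lam) := by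
          rw [e3 X _ hXp, e3 Y _ hYp, ← e5,
            Real.mul_rpow (Real.rpow_nonneg hXp.le _) (Real.rpow_nonneg hYp.le _)]
          conv_rhs => rw [← e4]
          ring
      _ ≤ 2 * (C ^ (1 / p₀) * D ^ (1 / q₀)) ^ (1 + lam) * apNormN p₀ q₀ w ^ (1 + lam) := by
          have hdiv : M / ((Finset.Icc l n).card : ℝ) ≤ 2 := by
            rw [div_le_iff₀ hm]; exact hMm
          have hpow : ((C ^ (1/p₀) * D ^ (1/q₀)) * apRatioN p₀ q₀ w l n') ^ (1 + lam)
              ≤ (C ^ (1/p₀) * D ^ (1/q₀)) ^ (1 + lam) * apNormN p₀ q₀ w ^ (1 + lam) := by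
            rw [Real.mul_rpow hcd.le hRnn]
            exact mul_le_mul_of_nonneg_left
              (Real.rpow_le_rpow hRnn hRle hl1.le) (Real.rpow_nonneg hcd.le _)
          calc M / ((Finset.Icc l n).card : ℝ) *
                ((C ^ (1/p₀) * D ^ (1/q₀)) * apRatioN p₀ q₀ w l n') ^ (1 + lam)
              ≤ 2 * ((C ^ (1/p₀) * D ^ (1/q₀)) ^ (1 + lam) * apNormN p₀ q₀ w ^ (1 + lam)) := by
                apply mul_le_mul hdiv hpow (Real.rpow_nonneg (mul_nonneg hcd.le hRnn) _) (by norm_num)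
            _ = 2 * (C ^ (1/p₀) * D ^ (1/q₀)) ^ (1 + lam) * apNormN p₀ q₀ w ^ (1 + lam) := by
                ring
  constructor
  · exact ⟨_, key⟩
  · apply Real.sSup_le
    · rintro x ⟨l, n, hln, rfl⟩
      exact key l n hln
    · have : (0:ℝ) ≤ apNormN p₀ q₀ w ^ (1 + lam) := Real.rpow_nonneg hNw0 _
      have h2 : (0:ℝ) ≤ (C ^ (1 / p₀) * D ^ (1 / q₀)) ^ (1 + lam) :=
        Real.rpow_nonneg hcd.le _
      nlinarith
end

section
/- Let 1 < p < ∞ with conjugate exponent p′ (1/p + 1/p′ = 1), let w : ℤ → (0,∞) be a weight, and let T be a linear operator on the space of all complex sequences on ℤ. Suppose there are constants M₁, M₂ ∈ (0,∞) such that ‖Tφ‖_{ℓ^p(ℤ,w)} ≤ M₁ ‖φ‖_{ℓ^p(ℤ,w)} for every φ with ‖φ‖_{ℓ^p(ℤ,w)} < ∞, and ‖Tφ‖_{ℓ^{p′}(ℤ,1/w)} ≤ M₂ ‖φ‖_{ℓ^{p′}(ℤ,1/w)} for every φ with ‖φ‖_{ℓ^{p′}(ℤ,1/w)} < ∞. Then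 T is bounded on ℓ²(ℤ) and ‖Tφ‖_{ℓ²(ℤ)} ≤ (M₁ M₂)^{1/2} ‖φ‖_{ℓ²(ℤ)} for every φ ∈ ℓ²(ℤ). -/
open scoped ENNReal

/-- The norm of `φ` in the weighted space `ℓ^r(ℤ,u)` (with value in `[0,∞]`). -/
noncomputable def wNorm (r : ℝ) (u : ℤ → ℝ) (φ : ℤ → ℂ) : ℝ≥0∞ :=
  (∑' k : ℤ, ENNReal.ofReal (‖φ k‖ * u k) ^ r) ^ (1 / r)

/-- Convolution of a sequence `c : ℤ → ℂ` with a finitely supported `φ`. -/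
noncomputable def conv (c : ℤ → ℂ) (φ : ℤ →₀ ℂ) : ℤ → ℂ :=
  fun j => ∑ k ∈ φ.support, c (j - k) * φ k

/-- The multiplier norm `N_{r,u}(c)` of a sequence `c : ℤ → ℂ` on `ℓ^r(ℤ,u)`. -/
noncomputable def multNorm (r : ℝ) (u : ℤ → ℝ) (c : ℤ → ℂ) : ℝ≥0∞ :=
  ⨆ φ : {φ : ℤ →₀ ℂ // φ ≠ 0}, wNorm r u (conv c φ.1) / wNorm r u (φ.1 : ℤ → ℂ)

/-!
For finitely supported `f` and `g` put `f_z = f |f|^{2((1-z)/p + z/p') - 1} w^{2z-1}` and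
`g_z = g |g|^{2((1-z)/p' + z/p) - 1} w^{1-2z}`. Then `Φ(z) = ∑ (T f_z) g_z` is entire, bounded on
the strip `0 ≤ Re z ≤ 1`, and `Φ(1/2) = ∑ (T f) g`. On `Re z = 0` the norms of `f_z` in `ℓ^p(w)`
and of `g_z` in `ℓ^{p'}(1/w)` are `‖f‖₂^{2/p}` and `‖g‖₂^{2/p'}`, so Hölder's inequality and the
first bound give `|Φ| ≤ M₁ ‖f‖₂^{2/p} ‖g‖₂^{2/p'}`; symmetrically on `Re z = 1` with `M₂`. The three
lines theorem gives `|∑ (T f) g| ≤ √(M₁M₂) ‖f‖₂ ‖g‖₂`, hence the `ℓ²` bound for finitely supported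
`f` by duality.

As `T` is merely linear, a general `φ ∈ ℓ²` is reached through its truncations. Splitting each
coordinate according to whether `|φ| w ≤ |φ|^{2/p}` or `|φ| / w ≤ |φ|^{2/p'}` writes `φ` as an
element of `ℓ^p(w) + ℓ^{p'}(1/w)`, on both of which `T` is bounded; so `T` of the truncations
converges coordinatewise to `T φ`, and Fatou's lemma finishes.
-/

open Filter Topology ComplexConjugate Complex.HadamardThreeLines

lemma Real.HolderConjugate.div_add_div_eq {p p' : ℝ} (hpq : p.HolderConjugate p') (c : ℝ) :
    c / p + c / p' = c := by
  rw [div_eq_mul_inv, div_eq_mul_inv, ← mul_add, hpq.inv_add_inv_eq_one, mul_one]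

lemma mul_le_rpow_or_mul_inv_le_rpow {p p' : ℝ} (hpq : p.HolderConjugate p') {x v : ℝ}
    (hx : 0 ≤ x) (hv : 0 < v) : x * v ≤ x ^ (2 / p) ∨ x * v⁻¹ ≤ x ^ (2 / p') := by
  by_contra! h
  have hlt := mul_lt_mul'' h.1 h.2 (by positivity) (by positivity)
  rw [← Real.rpow_add' hx (by rw [hpq.div_add_div_eq]; norm_num), hpq.div_add_div_eq,
    mul_mul_mul_comm, mul_inv_cancel₀ hv.ne', mul_one, Real.rpow_two, sq] at hlt
  exact lt_irrefl _ hlt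

section WeightedNorm

variable {r : ℝ} {u : ℤ → ℝ}

lemma wNorm_le_iff (hr : 0 < r) {φ : ℤ → ℂ} {c : ℝ≥0∞} :
    wNorm r u φ ≤ c ↔ ∑' k, ENNReal.ofReal (‖φ k‖ * u k) ^ r ≤ c ^ r := by
  rw [wNorm, one_div, ENNReal.rpow_inv_le_iff hr]

lemma ofReal_mul_le_wNorm (hr : 0 < r) (φ : ℤ → ℂ) (k : ℤ) :
    ENNReal.ofReal (‖φ k‖ * u k) ≤ wNorm r u φ :=
  calc ENNReal.ofReal (‖φ k‖ * u k) = (ENNReal.ofReal (‖φ k‖ * u k) ^ r) ^ (1 / r) := by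
        rw [← ENNReal.rpow_mul, mul_one_div_cancel hr.ne', ENNReal.rpow_one]
    _ ≤ wNorm r u φ := by
        unfold wNorm
        gcongr
        exact ENNReal.le_tsum k

lemma wNorm_mono (hr : 0 < r) (hu : ∀ k, 0 ≤ u k) {φ ψ : ℤ → ℂ} (h : ∀ k, ‖φ k‖ ≤ ‖ψ k‖) :
    wNorm r u φ ≤ wNorm r u ψ := by
  unfold wNorm
  gcongr with k
  exacts [hu k, h k]

lemma wNorm_ne_top_of_forall_notMem_eq_zero (hr : 0 < r) {φ : ℤ → ℂ} {s : Finset ℤ}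
    (hφ : ∀ k ∉ s, φ k = 0) : wNorm r u φ ≠ ⊤ := by
  refine ENNReal.rpow_ne_top_of_nonneg (by positivity) ?_
  rw [tsum_eq_sum (s := s) fun k hk => by simp [hφ k hk, hr]]
  exact ENNReal.sum_ne_top.2 fun k _ => ENNReal.rpow_ne_top_of_nonneg hr.le ENNReal.ofReal_ne_top

lemma wNorm_le_rpow_of_le (hr : 0 < r) {s : ℝ} (hs : 0 < s) {φ ψ : ℤ → ℂ}
    (h : ∀ k, ‖ψ k‖ * u k ≤ ‖φ k‖ ^ (s / r)) :
    wNorm r u ψ ≤ wNorm s (fun _ => 1) φ ^ (s / r) := by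
  rw [wNorm, wNorm, ← ENNReal.rpow_mul, one_div_mul_eq_div, div_div_cancel_left' hs.ne',
    ← one_div]
  gcongr with k
  calc ENNReal.ofReal (‖ψ k‖ * u k) ^ r ≤ ENNReal.ofReal (‖φ k‖ ^ (s / r)) ^ r := by
        gcongr; exact h k
    _ = ENNReal.ofReal (‖φ k‖ * 1) ^ s := by
        rw [mul_one, ← ENNReal.ofReal_rpow_of_nonneg (norm_nonneg _) (by positivity),
          ← ENNReal.rpow_mul, div_mul_cancel₀ s hr.ne']

lemma wNorm_le_of_tendsto {ι : Type*} {l : Filter ι} [l.NeBot] (hr : 0 < r)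
    {φs : ι → ℤ → ℂ} {φ : ℤ → ℂ} (hlim : ∀ k, Tendsto (fun i => φs i k) l (𝓝 (φ k)))
    {c : ℝ≥0∞} (hc : ∀ i, wNorm r u (φs i) ≤ c) : wNorm r u φ ≤ c := by
  rw [wNorm_le_iff hr]
  refine ENNReal.summable.tsum_le_of_sum_le fun s => ?_
  have hterm : ∀ k, Tendsto (fun i => ENNReal.ofReal (‖φs i k‖ * u k) ^ r) l
      (𝓝 (ENNReal.ofReal (‖φ k‖ * u k) ^ r)) := fun k =>
    ((ENNReal.continuous_rpow_const.comp ENNReal.continuous_ofReal).tendsto _).comp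
      (((hlim k).norm).mul_const (u k))
  refine le_of_tendsto' (tendsto_finsetSum s fun k _ => hterm k) fun i => ?_
  exact (ENNReal.sum_le_tsum s).trans ((wNorm_le_iff hr).mp (hc i))

lemma tendsto_wNorm_indicator_compl (hr : 0 < r) {φ : ℤ → ℂ} (hφ : wNorm r u φ ≠ ⊤) :
    Tendsto (fun s : Finset ℤ => wNorm r u ((↑s : Set ℤ)ᶜ.indicator φ)) atTop (𝓝 0) := by
  set t : ℤ → ℝ≥0∞ := fun k => ENNReal.ofReal (‖φ k‖ * u k) ^ r
  have ht : ∑' k, t k ≠ ⊤ := fun h => hφ (by rw [wNorm, h, ENNReal.top_rpow_of_pos (by positivity)])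
  have htail : ∀ s : Finset ℤ,
      wNorm r u ((↑s : Set ℤ)ᶜ.indicator φ) = (∑' k : {k // k ∉ s}, t k) ^ (1 / r) := by
    intro s
    rw [wNorm, show (∑' k : {k // k ∉ s}, t k) = ∑' k : ↥((↑s : Set ℤ)ᶜ), t k from rfl,
      tsum_subtype]
    congr 1
    refine tsum_congr fun k => ?_
    by_cases hk : k ∈ s <;> simp [hk, t, hr]
  simp_rw [htail]
  have := ((ENNReal.continuous_rpow_const (y := 1 / r)).tendsto 0).comp
    (ENNReal.tendsto_tsum_compl_atTop_zero ht)
  rwa [ENNReal.zero_rpow_of_pos (by positivity)] at this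

lemma sq_wNorm_two_of_forall_notMem_eq_zero {φ : ℤ → ℂ} {s : Finset ℤ}
    (hφ : ∀ k ∉ s, φ k = 0) :
    wNorm 2 (fun _ => 1) φ ^ 2 = ∑ k ∈ s, ‖φ k‖ₑ ^ 2 := by
  calc wNorm 2 (fun _ => 1) φ ^ 2 = ∑' k, ‖φ k‖ₑ ^ 2 := by
        rw [wNorm, ← ENNReal.rpow_natCast, ← ENNReal.rpow_mul]
        norm_num
    _ = ∑ k ∈ s, ‖φ k‖ₑ ^ 2 := tsum_eq_sum fun k hk => by simp [hφ k hk]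

end WeightedNorm

lemma tendsto_indicator_finset_atTop {α M : Type*} [TopologicalSpace M] [Zero M] (f : α → M)
    (a : α) : Tendsto (fun s : Finset α => (↑s : Set α).indicator f a) atTop (𝓝 (f a)) :=
  tendsto_const_nhds.congr' <| (eventually_ge_atTop {a}).mono fun s hs =>
    (Set.indicator_of_mem (by simpa using hs) f).symm

def WBounded (r : ℝ) (u : ℤ → ℝ) (M : ℝ) (T : (ℤ → ℂ) →ₗ[ℂ] (ℤ → ℂ)) : Prop :=
  ∀ φ, wNorm r u φ ≠ ⊤ → wNorm r u (T φ) ≤ ENNReal.ofReal M * wNorm r u φ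

namespace WBounded

variable {r : ℝ} {u : ℤ → ℝ} {M : ℝ} {T : (ℤ → ℂ) →ₗ[ℂ] (ℤ → ℂ)}

lemma enorm_sum_apply_mul_le {r' : ℝ} (hrr' : r.HolderConjugate r') (hu : ∀ k, 0 < u k)
    (hT : WBounded r u M T) {X : ℤ → ℂ} (hX : wNorm r u X ≠ ⊤) (Y : ℤ → ℂ) (G : Finset ℤ) :
    ‖∑ j ∈ G, T X j * Y j‖ₑ ≤
      ENNReal.ofReal M * wNorm r u X * wNorm r' (fun k => (u k)⁻¹) Y := by
  have hsplit : ∀ j, ‖T X j * Y j‖ₑ =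
      ENNReal.ofReal (‖T X j‖ * u j) * ENNReal.ofReal (‖Y j‖ * (u j)⁻¹) := fun j => by
    rw [← ENNReal.ofReal_mul (by have := hu j; positivity), mul_mul_mul_comm,
      mul_inv_cancel₀ (hu j).ne', mul_one, ← norm_mul, ofReal_norm]
  calc ‖∑ j ∈ G, T X j * Y j‖ₑ ≤ ∑ j ∈ G, ‖T X j * Y j‖ₑ := enorm_sum_le _ _
    _ ≤ (∑ j ∈ G, ENNReal.ofReal (‖T X j‖ * u j) ^ r) ^ (1 / r) *
          (∑ j ∈ G, ENNReal.ofReal (‖Y j‖ * (u j)⁻¹) ^ r') ^ (1 / r') := by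
        simp_rw [hsplit]
        exact ENNReal.inner_le_Lp_mul_Lq _ _ _ hrr'
    _ ≤ wNorm r u (T X) * wNorm r' (fun k => (u k)⁻¹) Y := by
        unfold wNorm
        exact mul_le_mul'
          (ENNReal.rpow_le_rpow (ENNReal.sum_le_tsum G) (one_div_nonneg.2 hrr'.nonneg))
          (ENNReal.rpow_le_rpow (ENNReal.sum_le_tsum G) (one_div_nonneg.2 hrr'.symm.nonneg))
    _ ≤ ENNReal.ofReal M * wNorm r u X * wNorm r' (fun k => (u k)⁻¹) Y := by
        gcongr
        exact hT X hX

lemma enorm_sum_apply_mul_le_rpow {r' : ℝ} (hrr' : r.HolderConjugate r') (hu : ∀ k, 0 < u k)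
    (hT : WBounded r u M T) {f g X Y : ℤ → ℂ} (hf : wNorm 2 (fun _ => 1) f ≠ ⊤)
    (hX : ∀ k, ‖X k‖ * u k ≤ ‖f k‖ ^ (2 / r)) (hY : ∀ k, ‖Y k‖ * (u k)⁻¹ ≤ ‖g k‖ ^ (2 / r'))
    (G : Finset ℤ) :
    ‖∑ j ∈ G, T X j * Y j‖ₑ ≤ ENNReal.ofReal M * wNorm 2 (fun _ => 1) f ^ (2 / r) *
      wNorm 2 (fun _ => 1) g ^ (2 / r') := by
  have hXle := wNorm_le_rpow_of_le hrr'.pos two_pos hX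
  have hXfin : wNorm r u X ≠ ⊤ :=
    ne_top_of_le_ne_top (ENNReal.rpow_ne_top_of_nonneg (by have := hrr'.pos; positivity) hf) hXle
  refine (hT.enorm_sum_apply_mul_le hrr' hu hXfin Y G).trans ?_
  gcongr
  exact wNorm_le_rpow_of_le hrr'.symm.pos two_pos hY

lemma tendsto_apply_indicator (hr : 0 < r) (hu : ∀ k, 0 < u k) (hT : WBounded r u M T)
    {φ : ℤ → ℂ} (hφ : wNorm r u φ ≠ ⊤) (j : ℤ) :
    Tendsto (fun s : Finset ℤ => T ((↑s : Set ℤ).indicator φ) j) atTop (𝓝 (T φ j)) := by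
  have hu' : ENNReal.ofReal (u j) ≠ 0 := by simpa using hu j
  have hdist : ∀ s : Finset ℤ, edist (T ((↑s : Set ℤ).indicator φ) j) (T φ j) ≤
      ENNReal.ofReal M * wNorm r u ((↑s : Set ℤ)ᶜ.indicator φ) / ENNReal.ofReal (u j) := by
    intro s
    have htail : T φ - T ((↑s : Set ℤ).indicator φ) = T ((↑s : Set ℤ)ᶜ.indicator φ) := by
      rw [← map_sub, Set.indicator_compl]
    have hfin : wNorm r u ((↑s : Set ℤ)ᶜ.indicator φ) ≠ ⊤ :=
      ne_top_of_le_ne_top hφ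
        (wNorm_mono hr (fun k => (hu k).le) fun k => norm_indicator_le_norm_self _ _)
    rw [edist_comm, edist_eq_enorm_sub,
      ENNReal.le_div_iff_mul_le (Or.inl hu') (Or.inl ENNReal.ofReal_ne_top),
      ← Pi.sub_apply, htail, ← ofReal_norm, ← ENNReal.ofReal_mul (norm_nonneg _)]
    exact (ofReal_mul_le_wNorm hr _ j).trans (hT _ hfin)
  rw [tendsto_iff_edist_tendsto_0]
  refine tendsto_of_tendsto_of_tendsto_of_le_of_le tendsto_const_nhds ?_ (fun s => zero_le) hdist
  simpa using ENNReal.Tendsto.div_const (ENNReal.Tendsto.const_mul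
    (tendsto_wNorm_indicator_compl hr hφ) (Or.inr ENNReal.ofReal_ne_top)) (Or.inr hu')

end WBounded

lemma LinearMap.sum_apply_mul_eq_sum_product (T : (ℤ → ℂ) →ₗ[ℂ] (ℤ → ℂ)) {X : ℤ → ℂ}
    {F : Finset ℤ} (hX : ∀ k ∉ F, X k = 0) (Y : ℤ → ℂ) (G : Finset ℤ) :
    ∑ j ∈ G, T X j * Y j = ∑ x ∈ G ×ˢ F, X x.2 * T (Pi.single x.2 1) x.1 * Y x.1 := by
  have hX' : X = ∑ k ∈ F, X k • Pi.single k 1 := by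
    ext i
    by_cases hi : i ∈ F <;> simp [Finset.sum_apply, Pi.single_apply, hi, hX]
  rw [Finset.sum_product]
  refine Finset.sum_congr rfl fun j _ => ?_
  conv_lhs => rw [hX']
  simp [Finset.sum_apply, Finset.sum_mul]

lemma enorm_sq_le_mul_of_verticalStrip {Φ : ℂ → ℂ} (hd : Differentiable ℂ Φ)
    (hB : BddAbove ((norm ∘ Φ) '' verticalClosedStrip 0 1)) {a b : ℝ≥0∞} (ha : a ≠ ⊤)
    (hb : b ≠ ⊤) (h0 : ∀ z : ℂ, z.re = 0 → ‖Φ z‖ₑ ≤ a) (h1 : ∀ z : ℂ, z.re = 1 → ‖Φ z‖ₑ ≤ b) :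
    ‖Φ (1 / 2)‖ₑ ^ 2 ≤ a * b := by
  have hmem : (1 / 2 : ℂ) ∈ verticalClosedStrip 0 1 := by
    norm_num [verticalClosedStrip]
  have key := norm_le_interp_of_mem_verticalClosedStrip₀₁' Φ hmem hd.diffContOnCl hB
    (fun z hz => by simpa using ENNReal.toReal_mono ha (h0 z hz))
    (fun z hz => by simpa using ENNReal.toReal_mono hb (h1 z hz))
  norm_num [← Real.sqrt_eq_rpow] at key
  rw [← ENNReal.ofReal_toReal ha, ← ENNReal.ofReal_toReal hb,
    ← ENNReal.ofReal_mul ENNReal.toReal_nonneg, ← ofReal_norm, ← ENNReal.ofReal_pow (norm_nonneg _)]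
  gcongr
  calc ‖Φ (1 / 2)‖ ^ 2 ≤ (√a.toReal * √b.toReal) ^ 2 := by gcongr
    _ = a.toReal * b.toReal := by
        rw [mul_pow, Real.sq_sqrt ENNReal.toReal_nonneg, Real.sq_sqrt ENNReal.toReal_nonneg]

lemma bddAbove_norm_sum_verticalClosedStrip {ι : Type*} (s : Finset ι) {F : ι → ℂ → ℂ}
    (hF : ∀ i, Continuous (F i)) (hre : ∀ i z, ‖F i z‖ = ‖F i z.re‖) :
    BddAbove ((norm ∘ fun z => ∑ i ∈ s, F i z) '' verticalClosedStrip 0 1) := by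
  choose C hC using fun i =>
    ((isCompact_Icc (a := (0 : ℝ)) (b := 1)).image Complex.continuous_ofReal
      ).exists_bound_of_continuousOn (hF i).continuousOn
  refine ⟨∑ i ∈ s, C i, ?_⟩
  rintro _ ⟨z, hz, rfl⟩
  exact (norm_sum_le _ _).trans
    (Finset.sum_le_sum fun i _ => (hre i z).trans_le (hC i _ ⟨z.re, hz, rfl⟩))

noncomputable def powerFamily (a b : ℝ) (u : ℤ → ℝ) (f : ℤ → ℂ) (z : ℂ) (k : ℤ) : ℂ :=
  f k * (‖f k‖ : ℂ) ^ ((1 - z) * a + z * b - 1) * (u k : ℂ) ^ (2 * z - 1)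

namespace powerFamily

variable {a b : ℝ} {u : ℤ → ℝ} {f : ℤ → ℂ} {k : ℤ}

lemma eq_zero (h : f k = 0) (z : ℂ) : powerFamily a b u f z k = 0 := by
  simp [powerFamily, h]

lemma half (hab : a + b = 2) : powerFamily a b u f (1 / 2) = f := by
  have hexp : (1 - 1 / 2 : ℂ) * a + 1 / 2 * b - 1 = 0 := by
    have := congrArg (fun x : ℝ => (x : ℂ)) hab
    push_cast at this
    linear_combination this / 2
  have hexp' : (2 * (1 / 2) - 1 : ℂ) = 0 := by norm_num
  ext k
  rw [powerFamily, hexp, hexp', Complex.cpow_zero, Complex.cpow_zero, mul_one, mul_one]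

lemma differentiable (hu : 0 < u k) : Differentiable ℂ (powerFamily a b u f · k) := by
  by_cases h : f k = 0
  · simp [eq_zero h]
  · have hf : (‖f k‖ : ℂ) ≠ 0 := by simpa using h
    have hu' : (u k : ℂ) ≠ 0 := by exact_mod_cast hu.ne'
    unfold powerFamily
    fun_prop (disch := first | exact Or.inl hf | exact Or.inl hu')

lemma norm_eq (hu : 0 < u k) (z : ℂ) :
    ‖powerFamily a b u f z k‖ =
      ‖f k‖ * ‖f k‖ ^ ((1 - z.re) * a + z.re * b - 1) * u k ^ (2 * z.re - 1) := by
  by_cases h : f k = 0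
  · simp [eq_zero h, h]
  · rw [powerFamily, norm_mul, norm_mul, Complex.norm_cpow_eq_rpow_re_of_pos (norm_pos_iff.2 h),
      Complex.norm_cpow_eq_rpow_re_of_pos hu]
    simp

lemma norm_eq_norm_re (hu : 0 < u k) (z : ℂ) :
    ‖powerFamily a b u f z k‖ = ‖powerFamily a b u f z.re k‖ := by
  simp only [norm_eq hu, Complex.ofReal_re]

lemma norm_mul_of_re_eq_zero (hu : 0 < u k) (ha : a ≠ 0) {z : ℂ} (hz : z.re = 0) :
    ‖powerFamily a b u f z k‖ * u k = ‖f k‖ ^ a := by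
  rw [norm_eq hu, hz, ← Real.rpow_one_add' (norm_nonneg _) (by simpa using ha)]
  norm_num [Real.rpow_neg_one, hu.ne']

lemma norm_mul_inv_of_re_eq_one (hu : 0 < u k) (hb : b ≠ 0) {z : ℂ} (hz : z.re = 1) :
    ‖powerFamily a b u f z k‖ * (u k)⁻¹ = ‖f k‖ ^ b := by
  rw [norm_eq hu, hz, ← Real.rpow_one_add' (norm_nonneg _) (by simpa using hb)]
  norm_num [hu.ne']

end powerFamily

lemma differentiable_and_bddAbove_sum_apply_mul (T : (ℤ → ℂ) →ₗ[ℂ] (ℤ → ℂ))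
    {X Y : ℂ → ℤ → ℂ} (hXd : ∀ k, Differentiable ℂ (X · k)) (hYd : ∀ k, Differentiable ℂ (Y · k))
    (hXre : ∀ z k, ‖X z k‖ = ‖X z.re k‖) (hYre : ∀ z k, ‖Y z k‖ = ‖Y z.re k‖)
    {F : Finset ℤ} (hXF : ∀ z, ∀ k ∉ F, X z k = 0) (G : Finset ℤ) :
    Differentiable ℂ (fun z => ∑ j ∈ G, T (X z) j * Y z j) ∧
      BddAbove ((norm ∘ fun z => ∑ j ∈ G, T (X z) j * Y z j) '' verticalClosedStrip 0 1) := by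
  have hΦ : (fun z => ∑ j ∈ G, T (X z) j * Y z j) =
      fun z => ∑ x ∈ G ×ˢ F, X z x.2 * T (Pi.single x.2 1) x.1 * Y z x.1 :=
    funext fun z => T.sum_apply_mul_eq_sum_product (hXF z) (Y z) G
  rw [hΦ]
  have hd : ∀ x : ℤ × ℤ, Differentiable ℂ fun z => X z x.2 * T (Pi.single x.2 1) x.1 * Y z x.1 :=
    fun x => ((hXd x.2).mul_const _).mul (hYd x.1)
  refine ⟨Differentiable.fun_sum fun x _ => hd x,
    bddAbove_norm_sum_verticalClosedStrip _ (fun x => (hd x).continuous) fun x z => ?_⟩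
  simp only [norm_mul, hXre z, hYre z]

section Interpolation

variable {p p' : ℝ} {w : ℤ → ℝ} {M₁ M₂ : ℝ} {T : (ℤ → ℂ) →ₗ[ℂ] (ℤ → ℂ)} {C : ℝ≥0∞}

lemma enorm_sum_apply_mul_le_of_finite (hpq : p.HolderConjugate p') (hw : ∀ k, 0 < w k)
    (hT₁ : WBounded p w M₁ T) (hT₂ : WBounded p' (fun k => (w k)⁻¹) M₂ T)
    (hC : ENNReal.ofReal M₁ * ENNReal.ofReal M₂ ≤ C ^ 2) {f g : ℤ → ℂ} {F : Finset ℤ}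
    (hf : ∀ k ∉ F, f k = 0) (hg : wNorm 2 (fun _ => 1) g ≠ ⊤) (G : Finset ℤ) :
    ‖∑ j ∈ G, T f j * g j‖ₑ ≤ C * wNorm 2 (fun _ => 1) f * wNorm 2 (fun _ => 1) g := by
  have hp := hpq.pos
  have hp' := hpq.symm.pos
  have hsum : 2 / p + 2 / p' = 2 := hpq.div_add_div_eq 2
  have hw' : ∀ k, 0 < (w k)⁻¹ := fun k => inv_pos.2 (hw k)
  set A := wNorm 2 (fun _ => 1) f
  set B := wNorm 2 (fun _ => 1) g
  have hA : A ≠ ⊤ := wNorm_ne_top_of_forall_notMem_eq_zero two_pos hf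
  obtain ⟨hd, hB⟩ := differentiable_and_bddAbove_sum_apply_mul T
    (X := powerFamily (2 / p) (2 / p') w f) (Y := powerFamily (2 / p') (2 / p) (fun k => (w k)⁻¹) g)
    (fun k => powerFamily.differentiable (hw k)) (fun k => powerFamily.differentiable (hw' k))
    (fun z k => powerFamily.norm_eq_norm_re (hw k) z)
    (fun z k => powerFamily.norm_eq_norm_re (hw' k) z)
    (fun z k hk => powerFamily.eq_zero (hf k hk) z) G
  have key := enorm_sq_le_mul_of_verticalStrip hd hB (by finiteness) (by finiteness)
    (fun z hz => hT₁.enorm_sum_apply_mul_le_rpow hpq hw hA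
      (fun k => (powerFamily.norm_mul_of_re_eq_zero (hw k) (by positivity) hz).le)
      (fun k => (powerFamily.norm_mul_of_re_eq_zero (hw' k) (by positivity) hz).le) G)
    (fun z hz => hT₂.enorm_sum_apply_mul_le_rpow hpq.symm hw' hA
      (fun k => (powerFamily.norm_mul_inv_of_re_eq_one (hw k) (by positivity) hz).le)
      (fun k => (powerFamily.norm_mul_inv_of_re_eq_one (hw' k) (by positivity) hz).le) G)
  rw [powerFamily.half hsum, powerFamily.half ((add_comm _ _).trans hsum)] at key
  refine (ENNReal.pow_le_pow_left_iff two_ne_zero).1 (key.trans ?_)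
  calc ENNReal.ofReal M₁ * A ^ (2 / p) * B ^ (2 / p') *
        (ENNReal.ofReal M₂ * A ^ (2 / p') * B ^ (2 / p))
      = ENNReal.ofReal M₁ * ENNReal.ofReal M₂ * (A ^ (2 / p) * A ^ (2 / p')) *
          (B ^ (2 / p) * B ^ (2 / p')) := by ring
    _ = ENNReal.ofReal M₁ * ENNReal.ofReal M₂ * A ^ 2 * B ^ 2 := by
        rw [← ENNReal.rpow_add_of_nonneg _ _ (by positivity) (by positivity),
          ← ENNReal.rpow_add_of_nonneg _ _ (by positivity) (by positivity), hsum,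
          ENNReal.rpow_two, ENNReal.rpow_two]
    _ ≤ C ^ 2 * A ^ 2 * B ^ 2 := by gcongr
    _ = (C * A * B) ^ 2 := by ring

lemma exists_add_eq_wNorm_ne_top (hpq : p.HolderConjugate p') (hw : ∀ k, 0 < w k)
    {φ : ℤ → ℂ} (hφ : wNorm 2 (fun _ => 1) φ ≠ ⊤) :
    ∃ a b, a + b = φ ∧ wNorm p w a ≠ ⊤ ∧ wNorm p' (fun k => (w k)⁻¹) b ≠ ⊤ := by
  set A := {k | ‖φ k‖ * w k ≤ ‖φ k‖ ^ (2 / p)}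
  refine ⟨A.indicator φ, Aᶜ.indicator φ, Set.indicator_self_add_compl A φ, ?_, ?_⟩
  · refine ne_top_of_le_ne_top (ENNReal.rpow_ne_top_of_nonneg (by have := hpq.pos; positivity) hφ)
      (wNorm_le_rpow_of_le hpq.pos two_pos fun k => ?_)
    by_cases hk : k ∈ A
    · rw [Set.indicator_of_mem hk]
      exact hk
    · simp only [hk, not_false_eq_true, Set.indicator_of_notMem, norm_zero, zero_mul]
      positivity
  · refine ne_top_of_le_ne_top
      (ENNReal.rpow_ne_top_of_nonneg (by have := hpq.symm.pos; positivity) hφ)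
      (wNorm_le_rpow_of_le hpq.symm.pos two_pos fun k => ?_)
    by_cases hk : k ∈ A
    · simp only [hk, Set.mem_compl_iff, not_true_eq_false, not_false_eq_true,
        Set.indicator_of_notMem, norm_zero, zero_mul]
      positivity
    · simpa [hk] using (mul_le_rpow_or_mul_inv_le_rpow hpq (norm_nonneg _) (hw k)).resolve_left hk

lemma wNorm_two_apply_le_of_finite (hpq : p.HolderConjugate p') (hw : ∀ k, 0 < w k)
    (hT₁ : WBounded p w M₁ T) (hT₂ : WBounded p' (fun k => (w k)⁻¹) M₂ T)
    (hC : ENNReal.ofReal M₁ * ENNReal.ofReal M₂ ≤ C ^ 2) {f : ℤ → ℂ} {F : Finset ℤ}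
    (hf : ∀ k ∉ F, f k = 0) :
    wNorm 2 (fun _ => 1) (T f) ≤ C * wNorm 2 (fun _ => 1) f := by
  refine wNorm_le_of_tendsto two_pos (φs := fun G : Finset ℤ => (↑G : Set ℤ).indicator (T f))
    (tendsto_indicator_finset_atTop (T f)) fun G => ?_
  set ψ := (↑G : Set ℤ).indicator (T f)
  have hψ : ∀ j ∉ G, ψ j = 0 := fun j hj => Set.indicator_of_notMem (by simpa using hj) _
  have hψfin : wNorm 2 (fun _ => 1) ψ ≠ ⊤ := wNorm_ne_top_of_forall_notMem_eq_zero two_pos hψ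
  have hconj : wNorm 2 (fun _ => 1) (fun j => conj (ψ j)) = wNorm 2 (fun _ => 1) ψ := by
    simp only [wNorm, Complex.norm_conj]
  have hpair : ‖∑ j ∈ G, T f j * conj (ψ j)‖ₑ = wNorm 2 (fun _ => 1) ψ ^ 2 := by
    rw [sq_wNorm_two_of_forall_notMem_eq_zero hψ]
    calc ‖∑ j ∈ G, T f j * conj (ψ j)‖ₑ = ‖((∑ j ∈ G, ‖ψ j‖ ^ 2 : ℝ) : ℂ)‖ₑ := by
          push_cast
          refine congrArg _ (Finset.sum_congr rfl fun j hj => ?_)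
          rw [← Complex.mul_conj', show ψ j = T f j from Set.indicator_of_mem (by simpa using hj) _]
      _ = ∑ j ∈ G, ‖ψ j‖ₑ ^ 2 := by
          rw [← ofReal_norm, Complex.norm_real, Real.norm_of_nonneg (by positivity),
            ENNReal.ofReal_sum_of_nonneg fun _ _ => by positivity]
          simp [ENNReal.ofReal_pow, ofReal_norm]
  have key := enorm_sum_apply_mul_le_of_finite hpq hw hT₁ hT₂ hC hf (hconj ▸ hψfin) G
  rw [hpair, hconj] at key
  rcases eq_or_ne (wNorm 2 (fun _ => 1) ψ) 0 with h0 | h0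
  · simp [h0]
  · exact (ENNReal.mul_le_mul_iff_left h0 hψfin).1 (by rwa [← sq])

theorem wNorm_two_apply_le (hpq : p.HolderConjugate p') (hw : ∀ k, 0 < w k)
    (hT₁ : WBounded p w M₁ T) (hT₂ : WBounded p' (fun k => (w k)⁻¹) M₂ T)
    (hC : ENNReal.ofReal M₁ * ENNReal.ofReal M₂ ≤ C ^ 2) {φ : ℤ → ℂ}
    (hφ : wNorm 2 (fun _ => 1) φ ≠ ⊤) :
    wNorm 2 (fun _ => 1) (T φ) ≤ C * wNorm 2 (fun _ => 1) φ := by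
  obtain ⟨a, b, rfl, ha, hb⟩ := exists_add_eq_wNorm_ne_top hpq hw hφ
  refine wNorm_le_of_tendsto two_pos (l := atTop)
    (φs := fun s : Finset ℤ => T ((↑s : Set ℤ).indicator (a + b))) (fun j => ?_) fun s => ?_
  · simpa only [Set.indicator_add', map_add, Pi.add_apply] using
      (hT₁.tendsto_apply_indicator hpq.pos hw ha j).add
        (hT₂.tendsto_apply_indicator hpq.symm.pos (fun k => inv_pos.2 (hw k)) hb j)
  · refine (wNorm_two_apply_le_of_finite hpq hw hT₁ hT₂ hC (F := s)
      fun k hk => Set.indicator_of_notMem (by simpa using hk) _).trans ?_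
    gcongr
    exact wNorm_mono two_pos (fun _ => zero_le_one) fun k => norm_indicator_le_norm_self _ _

end Interpolation

lemma ENNReal.ofReal_mul_ofReal_le_ofReal_sqrt_sq (a b : ℝ) :
    ENNReal.ofReal a * ENNReal.ofReal b ≤ ENNReal.ofReal √(a * b) ^ 2 := by
  rw [← ENNReal.ofReal_pow (Real.sqrt_nonneg _), Real.sq_sqrt']
  rcases le_or_gt 0 a with ha | ha
  · rw [← ENNReal.ofReal_mul ha]
    exact ENNReal.ofReal_le_ofReal (le_max_left _ _)
  · simp [ENNReal.ofReal_of_nonpos ha.le]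

theorem interpolation_ell2_general (p p' : ℝ) (hp : 1 < p) (hpq : 1 / p + 1 / p' = 1)
    (w : ℤ → ℝ) (hw : ∀ k, 0 < w k) (T : (ℤ → ℂ) →ₗ[ℂ] (ℤ → ℂ))
    (M₁ M₂ : ℝ)
    (h1 : ∀ φ : ℤ → ℂ, wNorm p w φ ≠ ⊤ →
      wNorm p w (T φ) ≤ ENNReal.ofReal M₁ * wNorm p w φ)
    (h2 : ∀ φ : ℤ → ℂ, wNorm p' (fun k => (w k)⁻¹) φ ≠ ⊤ →
      wNorm p' (fun k => (w k)⁻¹) (T φ) ≤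
        ENNReal.ofReal M₂ * wNorm p' (fun k => (w k)⁻¹) φ) :
    ∀ φ : ℤ → ℂ, wNorm 2 (fun _ => 1) φ ≠ ⊤ →
      wNorm 2 (fun _ => 1) (T φ) ≤
        ENNReal.ofReal (Real.sqrt (M₁ * M₂)) * wNorm 2 (fun _ => 1) φ := by
  intro φ hφ
  have hpq' : p.HolderConjugate p' :=
    Real.holderConjugate_iff.2 ⟨hp, by simpa only [one_div] using hpq⟩
  exact wNorm_two_apply_le hpq' hw h1 h2 (ENNReal.ofReal_mul_ofReal_le_ofReal_sqrt_sq M₁ M₂) hφ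

/-- **Interpolation between `ℓ^p(ℤ,w)` and its associate space `ℓ^{p′}(ℤ,1/w)`** (via the
Lozanovskii formula `(X^{1/2}(X′)^{1/2})(ℤ) = ℓ²(ℤ)`): a linear operator on the space of
all sequences which is bounded on `ℓ^p(ℤ,w)` with constant `M₁` and on `ℓ^{p′}(ℤ,1/w)`
with constant `M₂` is bounded on `ℓ²(ℤ)` with constant `(M₁M₂)^{1/2}`. -/
theorem interpolation_ell2 (p p' : ℝ) (hp : 1 < p) (hpq : 1 / p + 1 / p' = 1)
    (w : ℤ → ℝ) (hw : ∀ k, 0 < w k) (T : (ℤ → ℂ) →ₗ[ℂ] (ℤ → ℂ))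
    (M₁ M₂ : ℝ) (hM₁ : 0 < M₁) (hM₂ : 0 < M₂)
    (h1 : ∀ φ : ℤ → ℂ, wNorm p w φ ≠ ⊤ →
      wNorm p w (T φ) ≤ ENNReal.ofReal M₁ * wNorm p w φ)
    (h2 : ∀ φ : ℤ → ℂ, wNorm p' (fun k => (w k)⁻¹) φ ≠ ⊤ →
      wNorm p' (fun k => (w k)⁻¹) (T φ) ≤
        ENNReal.ofReal M₂ * wNorm p' (fun k => (w k)⁻¹) φ) :
    ∀ φ : ℤ → ℂ, wNorm 2 (fun _ => 1) φ ≠ ⊤ →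
      wNorm 2 (fun _ => 1) (T φ) ≤
        ENNReal.ofReal (Real.sqrt (M₁ * M₂)) * wNorm 2 (fun _ => 1) φ :=
  interpolation_ell2_general p p' hp hpq w hw T M₁ M₂ h1 h2
end

section
/- Let 1 < p < ∞, let w : ℤ → (0,∞) be a symmetric weight (w_{−k} = w_k for all k), let c : ℤ → ℂ have finite multiplier norm N_{p,w}(c) on ℓ^p(ℤ,w), and let n ∈ ℤ₊. Define the n-th Fejér truncation σ_n c : ℤ → ℂ by (σ_n c)(k) := (1 − |k|/(n+1)) c(k) for |k| ≤ n and (σ_n c)(k) := 0 for |k| > n. Then N_{p,w}(σ_n c) ≤ N_{p,w}(c). -/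
/-!
Multiplying the coefficients by `z ^ k` with `|z| = 1` (translating the symbol) is an isometry of
every weighted `ℓ^p(ℤ,w)` that intertwines convolutions up to the same modulation of the test
sequence, so it does not increase the multiplier norm; by Minkowski's inequality the multiplier norm
is moreover subadditive and homogeneous. The Fejér mean of the symbol is the average of its
translates against the Fejér kernel, a probability density. Replacing the integral by the quadrature
at the `M`-th roots of unity gives a convex combination of modulations of `c` whose coefficients
agree with those of `σ_n c` for `|k| < M - n`. As `σ_n c` is supported in `[-n, n]`, once `M` is
large compared with the support of a test sequence `φ`, the convolution `σ_n c * φ` is pointwise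
dominated by the convolution of this combination with `φ`.
-/

open scoped ENNReal

/-- The `n`-th Fejér truncation of a sequence `c : ℤ → ℂ`:
`(σ_n c)(k) = (1 − |k|/(n+1)) c(k)` for `|k| ≤ n` and `0` otherwise. -/
noncomputable def fejerTrunc (n : ℕ) (c : ℤ → ℂ) : ℤ → ℂ :=
  fun k => if |k| ≤ (n : ℤ) then (1 - ((|k| : ℤ) : ℂ) / ((n : ℂ) + 1)) * c k else 0

open Finset

section Multipliers

variable {p : ℝ} {w : ℤ → ℝ}

theorem wNorm_congr {f g : ℤ → ℂ} (h : ∀ k, ‖f k‖ = ‖g k‖) : wNorm p w f = wNorm p w g := by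
  simp only [wNorm, h]

theorem wNorm_mono_s15 (hp : 0 ≤ p) (hw : ∀ k, 0 ≤ w k) {f g : ℤ → ℂ} (h : ∀ k, ‖f k‖ ≤ ‖g k‖) :
    wNorm p w f ≤ wNorm p w g := by
  unfold wNorm
  gcongr with k
  exacts [hw k, h k]

theorem wNorm_zero (hp : 0 < p) : wNorm p w 0 = 0 := by
  simp [wNorm, ENNReal.zero_rpow_of_pos hp, hp]

theorem wNorm_smul (hp : 0 < p) (a : ℂ) (f : ℤ → ℂ) :
    wNorm p w (a • f) = ‖a‖ₑ * wNorm p w f := by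
  have hterm : ∀ k, ENNReal.ofReal (‖(a • f) k‖ * w k) ^ p
      = ‖a‖ₑ ^ p * ENNReal.ofReal (‖f k‖ * w k) ^ p := fun k => by
    rw [Pi.smul_apply, norm_smul, mul_assoc, ENNReal.ofReal_mul (norm_nonneg a),
      ofReal_norm, ENNReal.mul_rpow_of_nonneg _ _ hp.le]
  rw [wNorm, wNorm, tsum_congr hterm, ENNReal.tsum_mul_left,
    ENNReal.mul_rpow_of_nonneg _ _ (by positivity), ← ENNReal.rpow_mul, mul_one_div_cancel hp.ne',
    ENNReal.rpow_one]

theorem wNorm_add_le (hp : 1 ≤ p) (hw : ∀ k, 0 ≤ w k) (f g : ℤ → ℂ) :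
    wNorm p w (f + g) ≤ wNorm p w f + wNorm p w g := by
  let F : (ℤ → ℂ) → ℤ → ℝ≥0∞ := fun h k => ENNReal.ofReal (‖h k‖ * w k)
  have hcount : ∀ h : ℤ → ℂ, wNorm p w h = (∫⁻ k, F h k ^ p ∂.count) ^ (1 / p) := fun h => by
    rw [MeasureTheory.lintegral_count]; rfl
  have hle : ∀ k, F (f + g) k ≤ (F f + F g) k := fun k => by
    simp only [F, Pi.add_apply]
    rw [← ENNReal.ofReal_add (mul_nonneg (norm_nonneg _) (hw k))
      (mul_nonneg (norm_nonneg _) (hw k)), ← add_mul]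
    exact ENNReal.ofReal_le_ofReal (mul_le_mul_of_nonneg_right (norm_add_le _ _) (hw k))
  rw [hcount, hcount, hcount]
  calc (∫⁻ k, F (f + g) k ^ p ∂.count) ^ (1 / p)
      ≤ (∫⁻ k, (F f + F g) k ^ p ∂.count) ^ (1 / p) := by
        gcongr with k
        exact hle k
    _ ≤ _ := ENNReal.lintegral_Lp_add_le (measurable_of_countable _).aemeasurable
        (measurable_of_countable _).aemeasurable hp

theorem wNorm_sum_le (hp : 1 ≤ p) (hw : ∀ k, 0 ≤ w k) {ι : Type*} (s : Finset ι)
    (f : ι → ℤ → ℂ) : wNorm p w (∑ i ∈ s, f i) ≤ ∑ i ∈ s, wNorm p w (f i) := by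
  induction s using Finset.cons_induction with
  | empty => simp [wNorm_zero (zero_lt_one.trans_le hp)]
  | cons i s his ih =>
    rw [sum_cons, sum_cons]
    exact (wNorm_add_le hp hw _ _).trans (by gcongr)

theorem wNorm_finsupp_ne_top (hp : 0 < p) (ψ : ℤ →₀ ℂ) : wNorm p w ψ ≠ ⊤ := by
  have hz : ∀ k ∉ ψ.support, ENNReal.ofReal (‖ψ k‖ * w k) ^ p = 0 := fun k hk => by
    simp [Finsupp.notMem_support_iff.mp hk, ENNReal.zero_rpow_of_pos hp]
  rw [wNorm, tsum_eq_sum hz]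
  exact ENNReal.rpow_ne_top_of_nonneg (by positivity)
    (ENNReal.sum_ne_top.mpr fun k _ => ENNReal.rpow_ne_top_of_nonneg hp.le ENNReal.ofReal_ne_top)

theorem wNorm_finsupp_ne_zero (hp : 0 < p) (hw : ∀ k, 0 < w k) {ψ : ℤ →₀ ℂ} (hψ : ψ ≠ 0) :
    wNorm p w ψ ≠ 0 := by
  obtain ⟨k, hk⟩ := Finsupp.ne_iff.mp hψ
  have hterm : 0 < ENNReal.ofReal (‖ψ k‖ * w k) ^ p :=
    ENNReal.rpow_pos_of_nonneg (ENNReal.ofReal_pos.mpr (mul_pos (norm_pos_iff.mpr hk) (hw k)))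
      hp.le
  exact (ENNReal.rpow_pos_of_nonneg (hterm.trans_le (ENNReal.le_tsum k)) (by positivity)).ne'

theorem conv_eq_sum_of_support_subset (c : ℤ → ℂ) {φ : ℤ →₀ ℂ} {s : Finset ℤ}
    (hs : φ.support ⊆ s) (j : ℤ) : conv c φ j = ∑ k ∈ s, c (j - k) * φ k :=
  sum_subset hs fun k _ hk => by rw [Finsupp.notMem_support_iff.mp hk, mul_zero]

theorem conv_zero (c : ℤ → ℂ) : conv c 0 = 0 := by
  ext j; simp [conv]

theorem conv_sum_smul {ι : Type*} (s : Finset ι) (a : ι → ℂ) (c : ι → ℤ → ℂ) (φ : ℤ →₀ ℂ) :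
    conv (∑ i ∈ s, a i • c i) φ = ∑ i ∈ s, a i • conv (c i) φ := by
  ext j
  simp only [conv, Finset.sum_apply, Pi.smul_apply, smul_eq_mul, sum_mul, mul_sum]
  rw [sum_comm]
  exact sum_congr rfl fun i _ => sum_congr rfl fun k _ => mul_assoc _ _ _

theorem wNorm_conv_le_multNorm_mul (hp : 0 < p) (hw : ∀ k, 0 < w k) (c : ℤ → ℂ)
    (ψ : ℤ →₀ ℂ) : wNorm p w (conv c ψ) ≤ multNorm p w c * wNorm p w ψ := by
  rcases eq_or_ne ψ 0 with rfl | hψ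
  · simp [conv_zero, wNorm_zero hp]
  calc wNorm p w (conv c ψ) = wNorm p w (conv c ψ) / wNorm p w ψ * wNorm p w ψ :=
        (ENNReal.div_mul_cancel (wNorm_finsupp_ne_zero hp hw hψ) (wNorm_finsupp_ne_top hp ψ)).symm
    _ ≤ multNorm p w c * wNorm p w ψ := by
        gcongr
        exact le_iSup (fun φ : {φ : ℤ →₀ ℂ // φ ≠ 0} => wNorm p w (conv c φ.1) / wNorm p w φ.1)
          ⟨ψ, hψ⟩

theorem multNorm_le_of_wNorm_conv_le {c : ℤ → ℂ} {C : ℝ≥0∞}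
    (h : ∀ φ : ℤ →₀ ℂ, wNorm p w (conv c φ) ≤ C * wNorm p w φ) : multNorm p w c ≤ C :=
  iSup_le fun φ => ENNReal.div_le_of_le_mul (h φ)

theorem multNorm_sum_smul_le (hp : 1 ≤ p) (hw : ∀ k, 0 < w k) {ι : Type*} (s : Finset ι)
    (a : ι → ℂ) (c : ι → ℤ → ℂ) :
    multNorm p w (∑ i ∈ s, a i • c i) ≤ ∑ i ∈ s, ‖a i‖ₑ * multNorm p w (c i) := by
  have hp0 : 0 < p := zero_lt_one.trans_le hp
  refine multNorm_le_of_wNorm_conv_le fun φ => ?_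
  calc wNorm p w (conv (∑ i ∈ s, a i • c i) φ)
      ≤ ∑ i ∈ s, wNorm p w (a i • conv (c i) φ) := by
        rw [conv_sum_smul]
        exact wNorm_sum_le hp (fun k => (hw k).le) _ _
    _ ≤ ∑ i ∈ s, ‖a i‖ₑ * (multNorm p w (c i) * wNorm p w φ) := by
        gcongr with i
        rw [wNorm_smul hp0]
        gcongr
        exact wNorm_conv_le_multNorm_mul hp0 hw _ _
    _ = (∑ i ∈ s, ‖a i‖ₑ * multNorm p w (c i)) * wNorm p w φ := by
        simp only [sum_mul, mul_assoc]

/-- On the symbol side, modulation by `z = e^{iθ}` is translation by `θ`. -/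
noncomputable def modulate (z : ℂ) (c : ℤ → ℂ) : ℤ → ℂ :=
  fun k => z ^ k * c k

noncomputable def modulateFinsupp (z : ℂ) (φ : ℤ →₀ ℂ) : ℤ →₀ ℂ :=
  Finsupp.onFinset φ.support (modulate z φ) fun _ hk =>
    Finsupp.mem_support_iff.mpr (right_ne_zero_of_mul hk)

theorem coe_modulateFinsupp (z : ℂ) (φ : ℤ →₀ ℂ) : ⇑(modulateFinsupp z φ) = modulate z φ :=
  rfl

theorem modulateFinsupp_ne_zero {z : ℂ} (hz : z ≠ 0) {φ : ℤ →₀ ℂ} (hφ : φ ≠ 0) :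
    modulateFinsupp z φ ≠ 0 := by
  obtain ⟨k, hk⟩ := Finsupp.ne_iff.mp hφ
  exact Finsupp.ne_iff.mpr ⟨k, mul_ne_zero (zpow_ne_zero k hz) hk⟩

theorem conv_modulate {z : ℂ} (hz : z ≠ 0) (c : ℤ → ℂ) (φ : ℤ →₀ ℂ) :
    conv (modulate z c) φ = modulate z (conv c (modulateFinsupp z⁻¹ φ)) := by
  ext j
  have hsupp : (modulateFinsupp z⁻¹ φ).support ⊆ φ.support := Finsupp.support_onFinset_subset
  rw [modulate, conv_eq_sum_of_support_subset c hsupp j, conv, mul_sum]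
  refine sum_congr rfl fun k _ => ?_
  rw [coe_modulateFinsupp, modulate, modulate, inv_zpow, zpow_sub₀ hz, div_eq_mul_inv]
  ring

theorem wNorm_modulate {z : ℂ} (hz : ‖z‖ = 1) (f : ℤ → ℂ) :
    wNorm p w (modulate z f) = wNorm p w f :=
  wNorm_congr fun k => by rw [modulate, norm_mul, norm_zpow, hz, one_zpow, one_mul]

theorem multNorm_modulate_le {z : ℂ} (hz : ‖z‖ = 1) (c : ℤ → ℂ) :
    multNorm p w (modulate z c) ≤ multNorm p w c := by
  have hz0 : z ≠ 0 := norm_ne_zero_iff.mp (by rw [hz]; exact one_ne_zero)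
  have hz' : ‖z⁻¹‖ = 1 := by rw [norm_inv, hz, inv_one]
  refine iSup_le fun ⟨φ, hφ⟩ => ?_
  rw [conv_modulate hz0, wNorm_modulate hz, ← wNorm_modulate hz' φ, ← coe_modulateFinsupp]
  exact le_iSup (fun ψ : {ψ : ℤ →₀ ℂ // ψ ≠ 0} => wNorm p w (conv c ψ.1) / wNorm p w ψ.1)
    ⟨_, modulateFinsupp_ne_zero (inv_ne_zero hz0) hφ⟩

end Multipliers

section Fejer

theorem IsPrimitiveRoot.sum_pow_zpow {K : Type*} [Field K] {ζ : K} {M : ℕ}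
    (hζ : IsPrimitiveRoot ζ M) (q : ℤ) :
    ∑ j ∈ range M, (ζ ^ j) ^ q = if (M : ℤ) ∣ q then (M : K) else 0 := by
  have hcomm : ∀ j : ℕ, (ζ ^ j) ^ q = (ζ ^ q) ^ j := fun j => by
    rw [← zpow_natCast, ← zpow_natCast, ← zpow_mul, ← zpow_mul, mul_comm]
  simp_rw [hcomm]
  split_ifs with hq
  · simp [(hζ.zpow_eq_one_iff_dvd q).mpr hq]
  · have hpow : (ζ ^ q) ^ M = 1 := by
      rw [← zpow_natCast, ← zpow_mul, mul_comm, zpow_mul, zpow_natCast, hζ.pow_eq_one, one_zpow]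
    rw [geom_sum_eq (mt (hζ.zpow_eq_one_iff_dvd q).mp hq), hpow, sub_self, zero_div]

theorem card_filter_add_mem_Icc (n : ℕ) (m : ℤ) :
    #{k ∈ Icc (0 : ℤ) n | k + m ∈ Icc (0 : ℤ) n} = ((n : ℤ) + 1 - |m|).toNat := by
  have : {k ∈ Icc (0 : ℤ) n | k + m ∈ Icc (0 : ℤ) n} = Icc (max 0 (-m)) (min n (n - m)) := by
    ext k; simp only [mem_filter, mem_Icc]; omega
  rw [this, Int.card_Icc]
  congr 1
  rcases abs_cases m with ⟨h, _⟩ | ⟨h, _⟩ <;> rw [h] <;> omega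

theorem sq_norm_sum_zpow {z : ℂ} (hz : ‖z‖ = 1) (s : Finset ℤ) :
    ((‖∑ k ∈ s, z ^ k‖ ^ 2 : ℝ) : ℂ) = ∑ k ∈ s, ∑ l ∈ s, z ^ (k - l) := by
  have hz0 : z ≠ 0 := norm_ne_zero_iff.mp (by rw [hz]; exact one_ne_zero)
  rw [Complex.ofReal_pow, ← Complex.mul_conj', map_sum, sum_mul_sum]
  refine sum_congr rfl fun k _ => sum_congr rfl fun l _ => ?_
  rw [map_zpow₀, ← Complex.inv_eq_conj hz, inv_zpow', ← zpow_add₀ hz0, sub_eq_add_neg]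

/-- The Fejér kernel `|∑_{k=0}^n z^k|² / (n+1)` at `z`, divided by the number `M` of nodes of the
quadrature in `fejerModulation`. -/
noncomputable def fejerWeight (n M : ℕ) (z : ℂ) : ℝ :=
  ‖∑ k ∈ Icc (0 : ℤ) n, z ^ k‖ ^ 2 / (M * (n + 1))

theorem fejerWeight_nonneg (n M : ℕ) (z : ℂ) : 0 ≤ fejerWeight n M z := by
  unfold fejerWeight; positivity

theorem sum_sum_ite_dvd_sub_add {M n : ℕ} {m : ℤ} (hm : |m| + n < M) :
    ∑ k ∈ Icc (0 : ℤ) n, ∑ l ∈ Icc (0 : ℤ) n, (if (M : ℤ) ∣ k - l + m then (M : ℂ) else 0)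
      = M * ((n : ℤ) + 1 - |m|).toNat := by
  -- `|k - l + m| < M`, so `M ∣ k - l + m` only when `k - l + m = 0`
  have hdvd : ∀ k ∈ Icc (0 : ℤ) n, ∀ l ∈ Icc (0 : ℤ) n, (M : ℤ) ∣ k - l + m ↔ l = k + m := by
    intro k hk l hl
    simp only [mem_Icc] at hk hl
    refine ⟨fun h => ?_, fun h => by rw [h]; simp⟩
    have h1 := le_abs_self m
    have h2 := neg_abs_le m
    have := Int.eq_zero_of_abs_lt_dvd h (abs_lt.mpr ⟨by omega, by omega⟩)
    omega
  rw [← card_filter_add_mem_Icc, card_eq_sum_ones, Nat.cast_sum, mul_sum, sum_filter]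
  refine sum_congr rfl fun k hk => ?_
  rw [sum_congr rfl fun l hl => if_congr (hdvd k hk l hl) rfl rfl, sum_ite_eq']
  simp

theorem sum_fejerWeight_mul_zpow {ζ : ℂ} {M : ℕ} (hζ : IsPrimitiveRoot ζ M) (n : ℕ) (m : ℤ)
    (hm : |m| + n < M) :
    ∑ j ∈ range M, (fejerWeight n M (ζ ^ j) : ℂ) * (ζ ^ j) ^ m
      = if |m| ≤ n then 1 - ((|m| : ℤ) : ℂ) / ((n : ℂ) + 1) else 0 := by
  have hM : M ≠ 0 := by have := abs_nonneg m; omega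
  have hMC : (M : ℂ) ≠ 0 := Nat.cast_ne_zero.mpr hM
  have hn : (n : ℂ) + 1 ≠ 0 := by norm_cast
  have hexpand : ∀ j : ℕ, (fejerWeight n M (ζ ^ j) : ℂ) * (ζ ^ j) ^ m
      = (∑ k ∈ Icc (0 : ℤ) n, ∑ l ∈ Icc (0 : ℤ) n, (ζ ^ j) ^ (k - l + m)) / (M * (n + 1)) := by
    intro j
    have hζj : ‖ζ ^ j‖ = 1 := by rw [norm_pow, hζ.norm'_eq_one hM, one_pow]
    have hζj0 : ζ ^ j ≠ 0 := norm_ne_zero_iff.mp (by rw [hζj]; exact one_ne_zero)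
    rw [fejerWeight, Complex.ofReal_div, sq_norm_sum_zpow hζj, div_mul_eq_mul_div, sum_mul]
    simp_rw [sum_mul, ← zpow_add₀ hζj0]
    push_cast; rfl
  simp_rw [hexpand, ← sum_div]
  rw [sum_comm]
  simp_rw [sum_comm (s := range M), hζ.sum_pow_zpow]
  rw [sum_sum_ite_dvd_sub_add hm]
  split_ifs with h
  · have hcast : ((((n : ℤ) + 1 - |m|).toNat : ℕ) : ℂ) = (((n : ℤ) + 1 - |m| : ℤ) : ℂ) := by
      rw [← Int.cast_natCast, Int.toNat_of_nonneg (by omega)]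
    rw [hcast]
    field_simp
    push_cast
    ring
  · rw [Int.toNat_of_nonpos (by omega)]
    simp

theorem sum_fejerWeight {ζ : ℂ} {M : ℕ} (hζ : IsPrimitiveRoot ζ M) {n : ℕ} (hn : n < M) :
    ∑ j ∈ range M, fejerWeight n M (ζ ^ j) = 1 := by
  have h := sum_fejerWeight_mul_zpow hζ n 0 (by simpa using hn)
  simp only [zpow_zero, mul_one, abs_zero, Nat.cast_nonneg, if_true, Int.cast_zero, zero_div,
    sub_zero] at h
  exact_mod_cast h

/-- The Fejér mean `∫ K_n(θ) a(t + θ) dθ/2π` of the symbol, with the integral replaced by the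
`M`-point quadrature at the powers of `ζ`; it is exact on the coefficients with `|m| + n < M`. -/
noncomputable def fejerModulation (n M : ℕ) (ζ : ℂ) (c : ℤ → ℂ) : ℤ → ℂ :=
  ∑ j ∈ range M, (fejerWeight n M (ζ ^ j) : ℂ) • modulate (ζ ^ j) c

theorem fejerModulation_apply {ζ : ℂ} {M : ℕ} (hζ : IsPrimitiveRoot ζ M) (n : ℕ) (c : ℤ → ℂ)
    {m : ℤ} (hm : |m| + n < M) : fejerModulation n M ζ c m = fejerTrunc n c m := by
  simp only [fejerModulation, Finset.sum_apply, Pi.smul_apply, modulate, smul_eq_mul, ← mul_assoc,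
    ← sum_mul, sum_fejerWeight_mul_zpow hζ n m hm, fejerTrunc, ite_mul, zero_mul]

theorem multNorm_fejerModulation_le {p : ℝ} (hp : 1 ≤ p) {w : ℤ → ℝ} (hw : ∀ k, 0 < w k)
    {ζ : ℂ} {M : ℕ} (hζ : IsPrimitiveRoot ζ M) {n : ℕ} (hn : n < M) (c : ℤ → ℂ) :
    multNorm p w (fejerModulation n M ζ c) ≤ multNorm p w c := by
  have hM : M ≠ 0 := by omega
  calc multNorm p w (fejerModulation n M ζ c)
      ≤ ∑ j ∈ range M, ‖(fejerWeight n M (ζ ^ j) : ℂ)‖ₑ * multNorm p w (modulate (ζ ^ j) c) :=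
        multNorm_sum_smul_le hp hw _ _ _
    _ ≤ ∑ j ∈ range M, ENNReal.ofReal (fejerWeight n M (ζ ^ j)) * multNorm p w c := by
        gcongr with j
        · rw [← ofReal_norm, Complex.norm_real, Real.norm_of_nonneg (fejerWeight_nonneg _ _ _)]
        · exact multNorm_modulate_le (by rw [norm_pow, hζ.norm'_eq_one hM, one_pow]) c
    _ = multNorm p w c := by
        rw [← sum_mul, ← ENNReal.ofReal_sum_of_nonneg fun j _ => fejerWeight_nonneg _ _ _,
          sum_fejerWeight hζ hn, ENNReal.ofReal_one, one_mul]

theorem fejerTrunc_eq_zero {n : ℕ} (c : ℤ → ℂ) {m : ℤ} (hm : (n : ℤ) < |m|) :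
    fejerTrunc n c m = 0 :=
  if_neg hm.not_ge

end Fejer

/-- `conv d φ` vanishes outside `[-(R+n), R+n]`, and there it only sees `d` on `[-(2R+n), 2R+n]`. -/
theorem norm_conv_le_of_eqOn {d d' : ℤ → ℂ} {n R : ℕ} {φ : ℤ →₀ ℂ}
    (hd : ∀ m : ℤ, n < |m| → d m = 0) (hφ : ∀ k ∈ φ.support, |k| ≤ R)
    (hdd' : ∀ m : ℤ, |m| ≤ 2 * R + n → d m = d' m) (j : ℤ) : ‖conv d φ j‖ ≤ ‖conv d' φ j‖ := by
  by_cases hj : |j| ≤ R + n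
  · refine le_of_eq (congrArg _ (sum_congr rfl fun k hk => ?_))
    have hk := abs_le.mp (hφ k hk)
    have hj := abs_le.mp hj
    rw [hdd' (j - k) (abs_le.mpr ⟨by omega, by omega⟩)]
  · have hzero : conv d φ j = 0 := sum_eq_zero fun k hk => by
      have hk := abs_le.mp (hφ k hk)
      rcases lt_abs.mp (not_le.mp hj) with hj | hj <;>
        rw [hd (j - k) (lt_abs.mpr (by omega)), zero_mul]
    rw [hzero, norm_zero]
    exact norm_nonneg _

theorem multNorm_fejerTrunc_le_general (p : ℝ) (hp : 1 < p) (w : ℤ → ℝ)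
    (hw : ∀ k, 0 < w k) (c : ℤ → ℂ) (n : ℕ) :
    multNorm p w (fejerTrunc n c) ≤ multNorm p w c := by
  have hp0 : 0 < p := zero_lt_one.trans hp
  refine multNorm_le_of_wNorm_conv_le fun φ => ?_
  obtain ⟨R, hR⟩ : ∃ R : ℕ, ∀ k ∈ φ.support, |k| ≤ R :=
    ⟨φ.support.sup Int.natAbs, fun k hk => by
      rw [Int.abs_eq_natAbs]; exact_mod_cast le_sup (f := Int.natAbs) hk⟩
  set M := 2 * R + 2 * n + 1
  obtain ⟨ζ, hζ⟩ : ∃ ζ : ℂ, IsPrimitiveRoot ζ M := ⟨_, Complex.isPrimitiveRoot_exp M (by omega)⟩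
  have hagree : ∀ m : ℤ, |m| ≤ 2 * R + n → fejerTrunc n c m = fejerModulation n M ζ c m :=
    fun m hm => (fejerModulation_apply hζ n c (by omega)).symm
  calc wNorm p w (conv (fejerTrunc n c) φ)
      ≤ wNorm p w (conv (fejerModulation n M ζ c) φ) :=
        wNorm_mono_s15 hp0.le (fun k => (hw k).le)
          (norm_conv_le_of_eqOn (fun _ => fejerTrunc_eq_zero c) hR hagree)
    _ ≤ multNorm p w (fejerModulation n M ζ c) * wNorm p w φ :=
        wNorm_conv_le_multNorm_mul hp0 hw _ _
    _ ≤ multNorm p w c * wNorm p w φ := by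
        gcongr
        exact multNorm_fejerModulation_le hp.le hw hζ (by omega) c

/-- **Uniform boundedness of Fejér means in the multiplier norm**: for a symmetric weight
`w` and a multiplier `c` on `ℓ^p(ℤ,w)`, `N_{p,w}(σ_n c) ≤ N_{p,w}(c)` for all `n`. -/
theorem multNorm_fejerTrunc_le (p : ℝ) (hp : 1 < p) (w : ℤ → ℝ)
    (hw : ∀ k, 0 < w k) (hsym : ∀ k : ℤ, w (-k) = w k) (c : ℤ → ℂ)
    (hc : multNorm p w c ≠ ⊤) (n : ℕ) :
    multNorm p w (fejerTrunc n c) ≤ multNorm p w c :=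
  multNorm_fejerTrunc_le_general p hp w hw c n
end
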